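/- arXiv:2103.11411 — 8 statements merged into one kernel-verified Lean document; each statement's English description precedes it below -/
import Mathlib

section
/- Consider the networked SAIR(S) ODE system under the stated nonnegativity assumptions on parameters and adjacency weights. If the initial conditions satisfy s_i(0), a_i(0), p_i(0), r_i(0) ∈ [0,1] and s_i(0) + a_i(0) + p_i(0) + r_i(0) = 1 for every node i, then any solution of the system satisfies, for all t ≥ 0 and all i, s_i(t), a_i(t), p_i(t), r_i(t) ∈ [0,1] and s_i(t) + a_i(t) + p_i(t) + r_i(t) = 1. -/
/-!
The total population `s + a + p + r` of each node has derivative zero, so it stays equal to `1`;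
once all compartments are known to be nonnegative, each is then at most `1`.

Nonnegativity is a first-exit argument. Every outflow of a compartment is proportional to the
compartment itself, and the inflows are nonnegative combinations of the other compartments,
except for the bilinear infection term `s i * ∑ j, W i j * (a j + p j)`, which on a compact
time interval is bounded below by a constant times `ε` as soon as every compartment is `≥ -ε`.
Hence a compartment sitting at `-ε` while all others are `≥ -ε` decreases at rate at most `L ε`.
Shifting all compartments up by `ε * exp ((L + 1) * t)` makes the derivative strictly positive
whenever a shifted compartment touches zero, so none of them ever becomes negative; then let
`ε → 0`.
-/

open Set Filter Topology

theorem eventually_pos_nhdsGT_of_hasDerivWithinAt {f : ℝ → ℝ} {f' t : ℝ}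
    (hf : HasDerivWithinAt f f' (Ici t) t) (h0 : f t = 0) (hf' : 0 < f') :
    ∀ᶠ τ in 𝓝[>] t, 0 < f τ := by
  have hslope := (hasDerivWithinAt_iff_tendsto_slope' self_notMem_Ioi).1 hf.Ioi_of_Ici
  filter_upwards [hslope.eventually (eventually_gt_nhds hf'), self_mem_nhdsWithin]
    with τ hpos (hτ : t < τ)
  rw [slope_def_field, h0, sub_zero] at hpos
  exact (div_pos_iff_of_pos_right (sub_pos.2 hτ)).1 hpos

theorem nonneg_on_Icc_of_deriv_pos_of_eq_zero {ι : Type*} [Finite ι] {x : ℝ → ι → ℝ} {a b : ℝ}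
    (hx : ContinuousOn x (Icc a b)) (ha : 0 ≤ x a)
    (hderiv : ∀ t ∈ Ico a b, 0 ≤ x t → ∀ k, x t k = 0 →
      ∃ d > 0, HasDerivWithinAt (fun τ ↦ x τ k) d (Ici t) t) :
    ∀ t ∈ Icc a b, 0 ≤ x t := by
  refine fun t ht ↦ IsClosed.Icc_subset_of_forall_mem_nhdsWithin (s := x ⁻¹' Ici 0)
    (inter_comm _ _ ▸ hx.preimage_isClosed_of_isClosed isClosed_Icc isClosed_Ici) ha ?_ ht
  rintro t ⟨hxt, htI⟩
  suffices ∀ k, ∀ᶠ τ in 𝓝[>] t, 0 ≤ x τ k from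
    (eventually_all.2 this).mono fun τ ↦ Pi.le_def.2
  intro k
  rcases (hxt k).eq_or_lt with hzero | hpos
  · obtain ⟨d, hd, hdx⟩ := hderiv t htI hxt k hzero.symm
    exact (eventually_pos_nhdsGT_of_hasDerivWithinAt hdx hzero.symm hd).mono fun _ ↦ le_of_lt
  · have hcont : ContinuousWithinAt (fun τ ↦ x τ k) (Ioi t) t :=
      (continuousWithinAt_pi.1 (hx t (Ico_subset_Icc_self htI)) k).mono_of_mem_nhdsWithin
        (Icc_mem_nhdsGT_of_mem htI)
    exact (hcont.eventually (eventually_gt_nhds hpos)).mono fun _ ↦ le_of_lt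

/-- A quantitative form of quasipositivity, stated along the trajectory: unlike the pointwise
condition on the vector field, it yields invariance of the orthant without a Lipschitz bound. -/
def IsQuasipositiveOn {ι : Type*} (x : ℝ → ι → ℝ) (L : ι → ℝ) (S : Set ℝ) : Prop :=
  ∀ t ∈ S, ∀ ε > 0, (∀ j, -ε ≤ x t j) → ∀ k, x t k = -ε →
    ∃ d ≥ -(L k * ε), HasDerivWithinAt (fun τ ↦ x τ k) d (Ici t) t

theorem IsQuasipositiveOn.nonneg_on_Icc {ι : Type*} [Finite ι] {x : ℝ → ι → ℝ} {L : ι → ℝ}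
    {a b : ℝ} (hL : IsQuasipositiveOn x L (Ico a b)) (hx : ContinuousOn x (Icc a b))
    (ha : 0 ≤ x a) : ∀ t ∈ Icc a b, 0 ≤ x t := by
  obtain ⟨c, hc⟩ := Finite.exists_le L
  suffices h : ∀ ε > 0, ∀ t ∈ Icc a b, ∀ k, 0 ≤ x t k + ε * Real.exp ((c + 1) * t) by
    intro t ht k
    refine le_of_forall_pos_le_add fun δ hδ ↦ ?_
    have hexp := Real.exp_pos ((c + 1) * t)
    simpa [div_mul_cancel₀ _ hexp.ne'] using h (δ / Real.exp ((c + 1) * t)) (div_pos hδ hexp) t ht k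
  intro ε hε
  set B : ℝ → ℝ := fun τ ↦ ε * Real.exp ((c + 1) * τ) with hBdef
  have hBpos : ∀ τ, 0 < B τ := fun τ ↦ by positivity
  have hB : ∀ τ, HasDerivAt B ((c + 1) * B τ) τ := fun τ ↦
    (((hasDerivAt_id τ).const_mul (c + 1)).exp.const_mul ε).congr_deriv
      (by simp only [hBdef, id]; ring)
  have hBcont : Continuous B := continuous_iff_continuousAt.2 fun τ ↦ (hB τ).continuousAt
  refine fun t ht k ↦ nonneg_on_Icc_of_deriv_pos_of_eq_zero (x := fun τ k ↦ x τ k + B τ)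
    (continuousOn_pi.2 fun k ↦ (continuousOn_pi.1 hx k).add hBcont.continuousOn)
    (fun k ↦ add_nonneg (ha k) (hBpos a).le) ?_ t ht k
  intro t ht hnonneg k hk
  obtain ⟨d, hd, hdx⟩ := hL t ht (B t) (hBpos t)
    (fun j ↦ neg_le_iff_add_nonneg.2 (hnonneg j)) k (by linarith [hk])
  refine ⟨d + (c + 1) * B t, ?_, hdx.add (hB t).hasDerivWithinAt⟩
  linarith [mul_le_mul_of_nonneg_right (hc k) (hBpos t).le, hBpos t]

theorem IsCompact.exists_forall_abs_le_of_continuousOn {α ι : Type*} [TopologicalSpace α]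
    [Finite ι] {K : Set α} (hK : IsCompact K) {f : ι → α → ℝ} (hf : ∀ i, ContinuousOn (f i) K) :
    ∃ M ≥ 0, ∀ i, ∀ x ∈ K, |f i x| ≤ M := by
  choose C hC using fun i ↦ hK.exists_bound_of_continuousOn (hf i)
  obtain ⟨M, hM⟩ := Finite.exists_le C
  exact ⟨max M 0, le_max_right _ _,
    fun i x hx ↦ (hC i x hx).trans ((hM i).trans (le_max_left _ _))⟩

theorem neg_mul_le_mul_of_bounds {u v U V c ε : ℝ} (hU : 0 ≤ U) (hV : 0 ≤ V) (hc : 0 ≤ c)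
    (hε : 0 ≤ ε) (hu : -ε ≤ u) (huU : u ≤ U) (hv : -(c * ε) ≤ v) (hvV : v ≤ V) :
    -((V + c * U) * ε) ≤ u * v := by
  rcases le_total 0 v with hv0 | hv0
  · nlinarith [mul_nonneg hc (mul_nonneg hU hε)]
  · rcases le_total 0 u with hu0 | hu0
    · nlinarith [mul_nonneg hV hε]
    · nlinarith [mul_nonneg hV hε, mul_nonneg hc (mul_nonneg hU hε)]

def nsairsState {n : ℕ} (s a p r : Fin n → ℝ → ℝ) (t : ℝ) : Fin 4 × Fin n → ℝ :=
  fun c ↦ ![s, a, p, r] c.1 c.2 t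

section NSAIRS

variable {n : ℕ} {s a p r : Fin n → ℝ → ℝ} {β γ κ σ δ : Fin n → ℝ} {W : Fin n → Fin n → ℝ} {q : ℝ}
  (hβ : ∀ i, 0 ≤ β i) (hγ : ∀ i, 0 ≤ γ i) (hκ : ∀ i, 0 ≤ κ i) (hσ : ∀ i, 0 ≤ σ i)
  (hδ : ∀ i, 0 ≤ δ i) (hW : ∀ i j, 0 ≤ W i j) (hq0 : 0 ≤ q) (hq1 : q ≤ 1)
  (hs : ∀ i, ∀ t ≥ (0 : ℝ), HasDerivAt (s i)
    (-(β i) * s i t * (∑ j, W i j * (a j t + p j t)) + δ i * r i t) t)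
  (ha : ∀ i, ∀ t ≥ (0 : ℝ), HasDerivAt (a i)
    (q * β i * s i t * (∑ j, W i j * (a j t + p j t)) - σ i * a i t - κ i * a i t) t)
  (hp : ∀ i, ∀ t ≥ (0 : ℝ), HasDerivAt (p i)
    ((1 - q) * β i * s i t * (∑ j, W i j * (a j t + p j t)) + σ i * a i t - γ i * p i t) t)
  (hr : ∀ i, ∀ t ≥ (0 : ℝ), HasDerivAt (r i) (κ i * a i t + γ i * p i t - δ i * r i t) t)

include hs ha hp hr

theorem nsairs_total_eq (T : ℝ) (hT : 0 ≤ T) (i : Fin n) :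
    s i T + a i T + p i T + r i T = s i 0 + a i 0 + p i 0 + r i 0 := by
  have hderiv : ∀ t ≥ (0 : ℝ), HasDerivAt (fun τ ↦ s i τ + a i τ + p i τ + r i τ) 0 t :=
    fun t ht ↦ ((((hs i t ht).add (ha i t ht)).add (hp i t ht)).add (hr i t ht)).congr_deriv
      (by ring)
  exact constant_of_has_deriv_right_zero
    (fun t ht ↦ (hderiv t ht.1).continuousAt.continuousWithinAt)
    (fun t ht ↦ (hderiv t ht.1).hasDerivWithinAt) T ⟨hT, le_rfl⟩

theorem nsairsState_continuousOn (T : ℝ) : ContinuousOn (nsairsState s a p r) (Icc 0 T) := by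
  refine continuousOn_pi.2 fun ⟨k, i⟩ t ht ↦ ?_
  fin_cases k
  · exact (hs i t ht.1).continuousAt.continuousWithinAt
  · exact (ha i t ht.1).continuousAt.continuousWithinAt
  · exact (hp i t ht.1).continuousAt.continuousWithinAt
  · exact (hr i t ht.1).continuousAt.continuousWithinAt

include hβ hγ hκ hσ hδ hW hq0 hq1 in
theorem nsairs_isQuasipositiveOn {S : Set ℝ} (hS : S ⊆ Ici 0) {U V : ℝ} (hU0 : 0 ≤ U)
    (hV0 : 0 ≤ V) (hU : ∀ i, ∀ t ∈ S, s i t ≤ U)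
    (hV : ∀ i, ∀ t ∈ S, |∑ j, W i j * (a j t + p j t)| ≤ V) :
    ∃ L, IsQuasipositiveOn (nsairsState s a p r) L S := by
  refine ⟨fun c ↦ ![β c.2 * V + δ c.2, q * β c.2 * (V + 2 * (∑ j, W c.2 j) * U),
    (1 - q) * β c.2 * (V + 2 * (∑ j, W c.2 j) * U) + σ c.2, κ c.2 + γ c.2] c.1, ?_⟩
  rintro t ht ε hε hge ⟨k, i⟩ hk
  have hs' : -ε ≤ s i t := hge (0, i)
  have ha' : -ε ≤ a i t := hge (1, i)
  have hp' : -ε ≤ p i t := hge (2, i)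
  have hr' : -ε ≤ r i t := hge (3, i)
  have hexposure : -(2 * (∑ j, W i j) * ε) ≤ ∑ j, W i j * (a j t + p j t) :=
    calc -(2 * (∑ j, W i j) * ε) = ∑ j, W i j * (-ε + -ε) := by rw [← Finset.sum_mul]; ring
      _ ≤ _ := Finset.sum_le_sum fun j _ ↦
        mul_le_mul_of_nonneg_left (add_le_add (hge (1, j)) (hge (2, j))) (hW i j)
  have hprod := neg_mul_le_mul_of_bounds hU0 hV0 (mul_nonneg zero_le_two
    (Finset.sum_nonneg fun j _ ↦ hW i j)) hε.le hs' (hU i t ht) hexposure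
    ((le_abs_self _).trans (hV i t ht))
  have hE := (neg_le_neg (hV i t ht)).trans (neg_abs_le (∑ j, W i j * (a j t + p j t)))
  fin_cases k
  · refine ⟨_, ?_, (hs i t (hS ht)).hasDerivWithinAt⟩
    change s i t = -ε at hk
    change -((β i * V + δ i) * ε) ≤ _
    rw [hk]
    linarith [mul_le_mul_of_nonneg_left hE (mul_nonneg (hβ i) hε.le),
      mul_le_mul_of_nonneg_left hr' (hδ i)]
  · refine ⟨_, ?_, (ha i t (hS ht)).hasDerivWithinAt⟩
    change a i t = -ε at hk
    change -(q * β i * (V + 2 * (∑ j, W i j) * U) * ε) ≤ _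
    rw [hk]
    linarith [mul_le_mul_of_nonneg_left hprod (mul_nonneg hq0 (hβ i)), mul_nonneg (hσ i) hε.le,
      mul_nonneg (hκ i) hε.le]
  · refine ⟨_, ?_, (hp i t (hS ht)).hasDerivWithinAt⟩
    change p i t = -ε at hk
    change -(((1 - q) * β i * (V + 2 * (∑ j, W i j) * U) + σ i) * ε) ≤ _
    rw [hk]
    linarith [mul_le_mul_of_nonneg_left hprod (mul_nonneg (sub_nonneg.2 hq1) (hβ i)),
      mul_le_mul_of_nonneg_left ha' (hσ i), mul_nonneg (hγ i) hε.le]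
  · refine ⟨_, ?_, (hr i t (hS ht)).hasDerivWithinAt⟩
    change r i t = -ε at hk
    change -((κ i + γ i) * ε) ≤ _
    rw [hk]
    linarith [mul_le_mul_of_nonneg_left ha' (hκ i), mul_le_mul_of_nonneg_left hp' (hγ i),
      mul_nonneg (hδ i) hε.le]

include hβ hγ hκ hσ hδ hW hq0 hq1 in
theorem nsairs_nonneg (h0 : ∀ i, 0 ≤ s i 0 ∧ 0 ≤ a i 0 ∧ 0 ≤ p i 0 ∧ 0 ≤ r i 0)
    (T : ℝ) (hT : 0 ≤ T) (i : Fin n) : 0 ≤ s i T ∧ 0 ≤ a i T ∧ 0 ≤ p i T ∧ 0 ≤ r i T := by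
  have hx := nsairsState_continuousOn hs ha hp hr T
  obtain ⟨U, hU0, hU⟩ := isCompact_Icc.exists_forall_abs_le_of_continuousOn (f := s)
    fun i ↦ continuousOn_pi.1 hx (0, i)
  obtain ⟨V, hV0, hV⟩ := isCompact_Icc.exists_forall_abs_le_of_continuousOn
    (f := fun i t ↦ ∑ j, W i j * (a j t + p j t)) fun i ↦ continuousOn_finsetSum _ fun j _ ↦
      continuousOn_const.mul ((continuousOn_pi.1 hx (1, j)).add (continuousOn_pi.1 hx (2, j)))
  obtain ⟨L, hL⟩ := nsairs_isQuasipositiveOn hβ hγ hκ hσ hδ hW hq0 hq1 hs ha hp hr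
    (S := Ico 0 T) (fun t ht ↦ ht.1) hU0 hV0
    (fun i t ht ↦ (le_abs_self _).trans (hU i t (Ico_subset_Icc_self ht)))
    (fun i t ht ↦ hV i t (Ico_subset_Icc_self ht))
  have hstart : 0 ≤ nsairsState s a p r 0 := by
    rintro ⟨k, i⟩
    fin_cases k
    exacts [(h0 i).1, (h0 i).2.1, (h0 i).2.2.1, (h0 i).2.2.2]
  have h := hL.nonneg_on_Icc hx hstart T ⟨hT, le_rfl⟩
  exact ⟨h (0, i), h (1, i), h (2, i), h (3, i)⟩

end NSAIRS

/-- For the networked SAIR(S) ODE system with nonnegative parameters and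
adjacency weights, if the initial state of every node lies in the unit simplex
(each compartment in `[0,1]`, summing to `1`), then any solution stays in the simplex
for all `t ≥ 0`. -/
theorem nsairs_invariance
    (n : ℕ) (s a p r : Fin n → ℝ → ℝ)
    (β γ κ σ δ : Fin n → ℝ) (W : Fin n → Fin n → ℝ) (q : ℝ)
    (hβ : ∀ i, 0 ≤ β i) (hγ : ∀ i, 0 ≤ γ i) (hκ : ∀ i, 0 ≤ κ i)
    (hσ : ∀ i, 0 ≤ σ i) (hδ : ∀ i, 0 ≤ δ i)
    (hW : ∀ i j, 0 ≤ W i j) (hq0 : 0 ≤ q) (hq1 : q ≤ 1)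
    (hs : ∀ i, ∀ t ≥ (0 : ℝ), HasDerivAt (s i)
      (-(β i) * s i t * (∑ j, W i j * (a j t + p j t)) + δ i * r i t) t)
    (ha : ∀ i, ∀ t ≥ (0 : ℝ), HasDerivAt (a i)
      (q * β i * s i t * (∑ j, W i j * (a j t + p j t)) - σ i * a i t - κ i * a i t) t)
    (hp : ∀ i, ∀ t ≥ (0 : ℝ), HasDerivAt (p i)
      ((1 - q) * β i * s i t * (∑ j, W i j * (a j t + p j t)) + σ i * a i t - γ i * p i t) t)
    (hr : ∀ i, ∀ t ≥ (0 : ℝ), HasDerivAt (r i)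
      (κ i * a i t + γ i * p i t - δ i * r i t) t)
    (h0 : ∀ i, s i 0 ∈ Set.Icc (0 : ℝ) 1 ∧ a i 0 ∈ Set.Icc (0 : ℝ) 1 ∧
      p i 0 ∈ Set.Icc (0 : ℝ) 1 ∧ r i 0 ∈ Set.Icc (0 : ℝ) 1)
    (hsum0 : ∀ i, s i 0 + a i 0 + p i 0 + r i 0 = 1) :
    ∀ t ≥ (0 : ℝ), ∀ i,
      (s i t ∈ Set.Icc (0 : ℝ) 1 ∧ a i t ∈ Set.Icc (0 : ℝ) 1 ∧
        p i t ∈ Set.Icc (0 : ℝ) 1 ∧ r i t ∈ Set.Icc (0 : ℝ) 1) ∧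
      s i t + a i t + p i t + r i t = 1 := by
  intro t ht i
  have htotal : s i t + a i t + p i t + r i t = 1 :=
    (nsairs_total_eq hs ha hp hr t ht i).trans (hsum0 i)
  obtain ⟨hs0, ha0, hp0, hr0⟩ := nsairs_nonneg hβ hγ hκ hσ hδ hW hq0 hq1 hs ha hp hr
    (fun i ↦ ⟨(h0 i).1.1, (h0 i).2.1.1, (h0 i).2.2.1.1, (h0 i).2.2.2.1⟩) t ht i
  exact ⟨⟨⟨hs0, by linarith⟩, ⟨ha0, by linarith⟩, ⟨hp0, by linarith⟩, ⟨hr0, by linarith⟩⟩, htotal⟩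
end

section
/- Let β, σ, γ, κ > 0, δ > 0 and q ∈ [0,1], and let J^e be the 3×3 real matrix with rows (qβ−κ−σ, qβ, 0), ((1−q)β+σ, (1−q)β−γ, 0), (κ, γ, −δ). Then every complex eigenvalue of J^e has strictly negative real part if and only if R₀ := max( β/(κ+γ+σ), β(qγ+(1−q)κ+σ)/(γ(κ+σ)) ) < 1. -/
/-!
The Jacobian is block lower triangular, so its spectrum is `{-δ}` together with the eigenvalues
of its upper-left `2 × 2` block. Those are the roots of `z² - tr z + det`, which lie in the open
left half-plane exactly when `tr < 0` and `0 < det` (Routh–Hurwitz in degree two). After clearing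
the positive denominators, these two inequalities are the two halves of `R₀ < 1`.
-/

open Matrix in
theorem mem_spectrum_fin_three_of_upper_right_eq_zero {K : Type*} [Field K]
    (a b c d e f g r : K) :
    r ∈ spectrum K !![a, b, 0; c, d, 0; e, f, g] ↔
      r = g ∨ r ^ 2 - (a + d) * r + (a * d - b * c) = 0 := by
  have hdet : (algebraMap K (Matrix (Fin 3) (Fin 3) K) r - !![a, b, 0; c, d, 0; e, f, g]).det =
      (r - g) * (r ^ 2 - (a + d) * r + (a * d - b * c)) := by
    simp only [det_fin_three, Matrix.sub_apply, algebraMap_matrix_apply, Algebra.algebraMap_self,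
      RingHom.id_apply, of_apply, cons_val', cons_val_zero, cons_val_one, cons_val,
      cons_val_fin_one, Fin.isValue, Fin.reduceEq, ↓reduceIte]
    ring
  rw [spectrum.mem_iff, isUnit_iff_isUnit_det, isUnit_iff_ne_zero, not_not, hdet, mul_eq_zero,
    sub_eq_zero]

section Quadratic

variable {t D : ℝ}

theorem re_neg_of_sq_sub_mul_add_eq_zero (ht : t < 0) (hD : 0 < D) {z : ℂ}
    (hz : z ^ 2 - t * z + D = 0) : z.re < 0 := by
  have hre := congrArg Complex.re hz
  have him := congrArg Complex.im hz
  simp only [pow_two, Complex.add_re, Complex.sub_re, Complex.mul_re, Complex.ofReal_re,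
    Complex.ofReal_im, Complex.add_im, Complex.sub_im, Complex.mul_im, Complex.zero_re,
    Complex.zero_im] at hre him
  have him' : z.im * (2 * z.re - t) = 0 := by linarith
  rcases mul_eq_zero.mp him' with hy | hx
  · rw [hy] at hre
    nlinarith
  · linarith

theorem exists_sq_sub_mul_add_eq_zero_re_nonneg (ht : 0 ≤ t) :
    ∃ z : ℂ, z ^ 2 - t * z + D = 0 ∧ 0 ≤ z.re := by
  obtain ⟨s, hs⟩ := IsAlgClosed.exists_eq_mul_self ((t : ℂ) ^ 2 - 4 * D)
  -- the two roots `(t ± s) / 2` have real parts summing to `t`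
  rcases le_total 0 s.re with hs₀ | hs₀
  · exact ⟨(t + s) / 2, by linear_combination (-1 / 4 : ℂ) * hs, by simp; linarith⟩
  · exact ⟨(t - s) / 2, by linear_combination (-1 / 4 : ℂ) * hs, by simp; linarith⟩

theorem exists_sq_sub_mul_add_eq_zero_nonneg (hD : D ≤ 0) :
    ∃ x : ℝ, x ^ 2 - t * x + D = 0 ∧ 0 ≤ x := by
  have hs := Real.sq_sqrt (show 0 ≤ t ^ 2 - 4 * D by nlinarith)
  have ht : -t ≤ √(t ^ 2 - 4 * D) := (neg_le_abs t).trans (Real.abs_le_sqrt (by linarith))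
  exact ⟨(t + √(t ^ 2 - 4 * D)) / 2, by linear_combination hs / 4, by linarith⟩

theorem forall_re_neg_of_sq_sub_mul_add_eq_zero_iff :
    (∀ z : ℂ, z ^ 2 - t * z + D = 0 → z.re < 0) ↔ t < 0 ∧ 0 < D := by
  refine ⟨fun h => ⟨?_, ?_⟩, fun ⟨ht, hD⟩ _ => re_neg_of_sq_sub_mul_add_eq_zero ht hD⟩
  · by_contra! ht
    obtain ⟨z, hz, hre⟩ := exists_sq_sub_mul_add_eq_zero_re_nonneg (D := D) ht
    exact (h z hz).not_ge hre
  · by_contra! hD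
    obtain ⟨x, hx, hx₀⟩ := exists_sq_sub_mul_add_eq_zero_nonneg (t := t) hD
    exact (h x (by exact_mod_cast hx)).not_ge hx₀

end Quadratic

theorem forall_re_neg_spectrum_fin_three_of_upper_right_eq_zero_iff (a b c d e f g : ℝ) :
    (∀ μ ∈ spectrum ℂ ((!![a, b, 0; c, d, 0; e, f, g] : Matrix (Fin 3) (Fin 3) ℝ).map
      Complex.ofReal), μ.re < 0) ↔ g < 0 ∧ a + d < 0 ∧ 0 < a * d - b * c := by
  have hmap : (!![a, b, 0; c, d, 0; e, f, g] : Matrix (Fin 3) (Fin 3) ℝ).map Complex.ofReal =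
      !![(a : ℂ), b, 0; c, d, 0; e, f, g] := by
    ext i j; fin_cases i <;> fin_cases j <;> rfl
  simp only [hmap, mem_spectrum_fin_three_of_upper_right_eq_zero, or_imp, forall_and,
    forall_eq, Complex.ofReal_re]
  exact Iff.and Iff.rfl (by exact_mod_cast forall_re_neg_of_sq_sub_mul_add_eq_zero_iff)

theorem sairs_dfe_stability_iff_R0_general
    (β σ γ κ δ q : ℝ)
    (hσ : 0 < σ) (hγ : 0 < γ) (hκ : 0 < κ) (hδ : 0 < δ) :
    (∀ μ ∈ spectrum ℂ
        ((!![q * β - κ - σ, q * β, 0;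
             (1 - q) * β + σ, (1 - q) * β - γ, 0;
             κ, γ, -δ] : Matrix (Fin 3) (Fin 3) ℝ).map (Complex.ofReal)),
      μ.re < 0) ↔
    max (β / (κ + γ + σ)) (β * (q * γ + (1 - q) * κ + σ) / (γ * (κ + σ))) < 1 := by
  rw [forall_re_neg_spectrum_fin_three_of_upper_right_eq_zero_iff, max_lt_iff,
    div_lt_one (by positivity), div_lt_one (by positivity)]
  constructor
  · rintro ⟨-, htrace, hdet⟩
    constructor <;> linarith
  · rintro ⟨h₁, h₂⟩
    exact ⟨by linarith, by linarith, by linarith⟩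

/-- For positive parameters, all complex eigenvalues of the Jacobian of the
group SAIR(S) model at the disease-free equilibrium have strictly negative real part if
and only if the basic reproduction number
`R₀ = max( β/(κ+γ+σ), β(qγ+(1−q)κ+σ)/(γ(κ+σ)) )` is less than `1`. -/
theorem sairs_dfe_stability_iff_R0
    (β σ γ κ δ q : ℝ)
    (hβ : 0 < β) (hσ : 0 < σ) (hγ : 0 < γ) (hκ : 0 < κ) (hδ : 0 < δ)
    (hq : q ∈ Set.Icc (0 : ℝ) 1) :
    (∀ μ ∈ spectrum ℂ
        ((!![q * β - κ - σ, q * β, 0;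
             (1 - q) * β + σ, (1 - q) * β - γ, 0;
             κ, γ, -δ] : Matrix (Fin 3) (Fin 3) ℝ).map (Complex.ofReal)),
      μ.re < 0) ↔
    max (β / (κ + γ + σ)) (β * (q * γ + (1 - q) * κ + σ) / (γ * (κ + σ))) < 1 :=
  sairs_dfe_stability_iff_R0_general β σ γ κ δ q hσ hγ hκ hδ
end

section
/- Consider the group SAIR(S) model with β, σ, γ, κ > 0, δ > 0 and q ∈ [0,1]. If R₀ := max( β/(κ+γ+σ), β(qγ+(1−q)κ+σ)/(γ(κ+σ)) ) < 1, then for every solution (S, A, I, R) with initial condition satisfying S(0), A(0), I(0), R(0) ∈ [0,1] and S(0)+A(0)+I(0)+R(0) = 1, one has (S(t), A(t), I(t), R(t)) → (1, 0, 0, 0) as t → ∞. -/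
/-!
Solutions stay in the simplex. Nonnegativity holds because the vector field is quasi-positive
(a component's rate is nonnegative when that component vanishes and the others are nonnegative)
and locally Lipschitz: on a compact time interval the sum of the squared negative parts `N`
then satisfies `N' ≤ K N`, and Grönwall's inequality keeps it at `N(0) = 0`. The total population
is conserved, so in particular `S ≤ 1`.

With `θ = qγ + (1 - q)κ + σ`, the weights `(γ + σ, σ + κ)` give
`(γ + σ) A' + (σ + κ) I' = (βθ S - γ(κ + σ)) (A + I)`, which is at most `-D (A + I)` on the simplex,
where `D = γ(κ + σ) - βθ > 0` is the second half of `R₀ < 1`. Adding a small multiple `η R` to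
absorb the inflow `κ A + γ I` into `R` yields `V = (γ + σ) A + (σ + κ) I + η R` with `V' ≤ -c V`,
so `A`, `I`, `R` decay exponentially and `S = 1 - A - I - R → 1`.
-/

open Filter Set Topology
open scoped NNReal

theorem hasDerivAt_min_zero_sq (u : ℝ) :
    HasDerivAt (fun x : ℝ => min x 0 ^ 2) (2 * min u 0) u := by
  rcases lt_trichotomy u 0 with hu | rfl | hu
  · have h : (fun x : ℝ => x ^ 2) =ᶠ[𝓝 u] fun x => min x 0 ^ 2 := by
      filter_upwards [eventually_lt_nhds hu] with x hx
      rw [min_eq_left hx.le]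
    simpa [min_eq_left hu.le] using (hasDerivAt_pow 2 u).congr_of_eventuallyEq h.symm
  · have hl : HasDerivWithinAt (fun x : ℝ => min x 0 ^ 2) (2 * min 0 0) (Iic 0) 0 := by
      simpa using ((hasDerivAt_pow 2 (0 : ℝ)).hasDerivWithinAt (s := Iic 0)).congr
        (fun x hx => by simp [min_eq_left (mem_Iic.1 hx)]) (by simp)
    have hr : HasDerivWithinAt (fun x : ℝ => min x 0 ^ 2) (2 * min 0 0) (Ici 0) 0 := by
      simpa using (hasDerivWithinAt_const (0 : ℝ) (Ici 0) (0 : ℝ)).congr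
        (fun x hx => by simp [min_eq_right (mem_Ici.1 hx)]) (by simp)
    simpa using hl.union hr
  · have h : (fun _ : ℝ => (0 : ℝ)) =ᶠ[𝓝 u] fun x => min x 0 ^ 2 := by
      filter_upwards [eventually_gt_nhds hu] with x hx
      simp [min_eq_right hx.le]
    simpa [min_eq_right hu.le] using (hasDerivAt_const u (0 : ℝ)).congr_of_eventuallyEq h.symm

theorem le_mul_exp_of_hasDerivAt_of_le_mul {f f' : ℝ → ℝ} {K T : ℝ}
    (hf : ∀ t ∈ Icc 0 T, HasDerivAt f (f' t) t) (hf' : ∀ t ∈ Ico 0 T, f' t ≤ K * f t) :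
    ∀ t ∈ Icc 0 T, f t ≤ f 0 * Real.exp (K * t) := by
  intro t ht
  simpa [gronwallBound_ε0] using le_gronwallBound_of_liminf_deriv_right_le (K := K) (ε := 0)
    (fun x hx => (hf x hx).continuousAt.continuousWithinAt)
    (fun x hx r hr => (hf x (Ico_subset_Icc_self hx)).hasDerivWithinAt.liminf_right_slope_le hr)
    le_rfl (fun x hx => (add_zero (K * f x)).symm ▸ hf' x hx) t ht

def QuasiPositive {ι : Type*} (F : (ι → ℝ) → ι → ℝ) : Prop :=
  ∀ v, 0 ≤ v → ∀ i, v i = 0 → 0 ≤ F v i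

namespace QuasiPositive

variable {ι : Type*} [Fintype ι] {F : (ι → ℝ) → ι → ℝ}

theorem min_zero_mul_le (hF : QuasiPositive F) {L : ℝ≥0} {s : Set (ι → ℝ)}
    (hL : LipschitzOnWith L F s) {v : ι → ℝ} (hv : v ∈ s) (hv' : v ⊔ 0 ∈ s) (i : ι) :
    min (v i) 0 * F v i ≤ L * |min (v i) 0| * ‖v - v ⊔ 0‖ := by
  rcases le_or_gt 0 (v i) with hvi | hvi
  · simp [min_eq_right hvi]
  have hpos : 0 ≤ F (v ⊔ 0) i := hF _ le_sup_right i (by simp [hvi.le])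
  have hdiff : |F v i - F (v ⊔ 0) i| ≤ L * ‖v - v ⊔ 0‖ := by
    rw [← dist_eq_norm, ← Real.dist_eq]
    exact (dist_le_pi_dist (F v) (F (v ⊔ 0)) i).trans (hL.dist_le_mul v hv _ hv')
  rw [min_eq_left hvi.le, abs_of_neg hvi]
  nlinarith [neg_abs_le (F v i - F (v ⊔ 0) i)]

theorem sum_min_zero_mul_le (hF : QuasiPositive F) {L : ℝ≥0} {s : Set (ι → ℝ)}
    (hL : LipschitzOnWith L F s) {v : ι → ℝ} (hv : v ∈ s) (hv' : v ⊔ 0 ∈ s) :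
    ∑ i, min (v i) 0 * F v i ≤ Fintype.card ι * L * ∑ i, min (v i) 0 ^ 2 := by
  set m : ι → ℝ := fun i => min (v i) 0
  have hm : v - v ⊔ 0 = m := by
    ext i
    simp only [Pi.sub_apply, Pi.sup_apply, Pi.zero_apply, m]
    rcases le_total (v i) 0 with h | h <;> simp [h]
  have hnorm : ‖v - v ⊔ 0‖ ≤ ∑ i, |m i| := by
    rw [hm, pi_norm_le_iff_of_nonneg (by positivity)]
    exact fun i => Finset.single_le_sum (f := fun i => |m i|) (fun j _ => abs_nonneg _)
      (Finset.mem_univ i)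
  calc ∑ i, m i * F v i ≤ ∑ i, L * |m i| * ‖v - v ⊔ 0‖ :=
        Finset.sum_le_sum fun i _ => hF.min_zero_mul_le hL hv hv' i
    _ = L * (∑ i, |m i|) * ‖v - v ⊔ 0‖ := by rw [← Finset.sum_mul, ← Finset.mul_sum]
    _ ≤ L * (∑ i, |m i|) * ∑ i, |m i| := by gcongr
    _ = L * (∑ i, |m i|) ^ 2 := by ring
    _ ≤ L * (Fintype.card ι * ∑ i, |m i| ^ 2) := by
        gcongr
        exact sq_sum_le_card_mul_sum_sq
    _ = Fintype.card ι * L * ∑ i, m i ^ 2 := by simp only [sq_abs]; ring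

theorem nonneg_of_hasDerivAt (hF : QuasiPositive F) (hL : LocallyLipschitz F)
    {x : ℝ → ι → ℝ} (hx : ∀ t ≥ 0, HasDerivAt x (F (x t)) t) (h0 : 0 ≤ x 0)
    {T : ℝ} (hT : 0 ≤ T) : 0 ≤ x T := by
  obtain ⟨M, hM⟩ := isCompact_Icc.exists_bound_of_continuousOn
    fun t (ht : t ∈ Icc 0 T) => (hx t ht.1).continuousAt.continuousWithinAt
  obtain ⟨L, hL⟩ := LocallyLipschitzOn.exists_lipschitzOnWith_of_compact
    (isCompact_closedBall (0 : ι → ℝ) M) hL.locallyLipschitzOn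
  have hball : ∀ t ∈ Icc 0 T,
      x t ∈ Metric.closedBall 0 M ∧ x t ⊔ 0 ∈ Metric.closedBall 0 M := by
    intro t ht
    have hxt : ‖x t‖ ≤ M := hM t ht
    refine ⟨mem_closedBall_zero_iff.2 hxt, mem_closedBall_zero_iff.2 ?_⟩
    refine (pi_norm_le_iff_of_nonneg ((norm_nonneg _).trans hxt)).2 fun i => ?_
    refine le_trans ?_ ((norm_le_pi_norm (x t) i).trans hxt)
    rcases le_total (x t i) 0 with h | h <;> simp [h]
  set N : ℝ → ℝ := fun t => ∑ i, min (x t i) 0 ^ 2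
  have hN : ∀ t ∈ Icc 0 T, HasDerivAt N (∑ i, 2 * min (x t i) 0 * F (x t) i) t :=
    fun t ht => HasDerivAt.fun_sum fun i _ =>
      (hasDerivAt_min_zero_sq _).comp t (hasDerivAt_pi.1 (hx t ht.1) i)
  have hN' : ∀ t ∈ Ico 0 T,
      ∑ i, 2 * min (x t i) 0 * F (x t) i ≤ 2 * Fintype.card ι * L * N t := by
    intro t ht
    obtain ⟨hxt, hxt'⟩ := hball t (Ico_subset_Icc_self ht)
    have := hF.sum_min_zero_mul_le hL hxt hxt'
    simp only [mul_assoc, ← Finset.mul_sum] at this ⊢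
    linarith
  have hN0 : N 0 = 0 := Finset.sum_eq_zero fun i _ => by simpa using h0 i
  have hNT := le_mul_exp_of_hasDerivAt_of_le_mul hN hN' T ⟨hT, le_rfl⟩
  rw [hN0, zero_mul] at hNT
  intro i
  have := (Finset.sum_eq_zero_iff_of_nonneg (fun i _ => sq_nonneg _)).1
    (le_antisymm hNT (by positivity)) i (Finset.mem_univ i)
  simpa using this

end QuasiPositive

theorem tendsto_zero_of_hasDerivAt_le_neg_mul {f f' : ℝ → ℝ} {c : ℝ}
    (hf : ∀ t ≥ 0, HasDerivAt f (f' t) t) (hf' : ∀ t ≥ 0, f' t ≤ -c * f t)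
    (hc : 0 < c) (hf0 : ∀ t ≥ 0, 0 ≤ f t) : Tendsto f atTop (𝓝 0) := by
  have hbound : ∀ t ≥ 0, f t ≤ f 0 * Real.exp (-c * t) := fun t ht =>
    le_mul_exp_of_hasDerivAt_of_le_mul (fun s hs => hf s hs.1) (fun s hs => hf' s hs.1) t
      ⟨ht, le_rfl⟩
  have hexp : Tendsto (fun t => f 0 * Real.exp (-c * t)) atTop (𝓝 0) := by
    simpa using (Real.tendsto_exp_atBot.comp
      (tendsto_id.const_mul_atTop_of_neg (neg_neg_of_pos hc))).const_mul (f 0)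
  exact squeeze_zero' (eventually_ge_atTop 0 |>.mono hf0) (eventually_ge_atTop 0 |>.mono hbound)
    hexp

theorem tendsto_zero_of_nonneg_of_mul_le {α : Type*} {l : Filter α} {f g : α → ℝ} {w : ℝ}
    (hw : 0 < w) (hf : ∀ᶠ x in l, 0 ≤ f x) (hfg : ∀ᶠ x in l, w * f x ≤ g x)
    (hg : Tendsto g l (𝓝 0)) : Tendsto f l (𝓝 0) :=
  squeeze_zero' hf (hfg.mono fun _ h => (le_div_iff₀' hw).2 h) (by simpa using hg.div_const w)

def sairsField (β σ γ κ δ q : ℝ) (v : Fin 4 → ℝ) : Fin 4 → ℝ :=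
  ![-β * v 0 * (v 1 + v 2) + δ * v 3,
    q * β * v 0 * (v 1 + v 2) - (σ + κ) * v 1,
    (1 - q) * β * v 0 * (v 1 + v 2) + σ * v 1 - γ * v 2,
    κ * v 1 + γ * v 2 - δ * v 3]

section SAIRS

variable {β σ γ κ δ q : ℝ}

theorem quasiPositive_sairsField (hβ : 0 ≤ β) (hσ : 0 ≤ σ) (hγ : 0 ≤ γ) (hκ : 0 ≤ κ)
    (hδ : 0 ≤ δ) (hq : q ∈ Icc (0 : ℝ) 1) : QuasiPositive (sairsField β σ γ κ δ q) := by
  intro v hv i hvi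
  have hv : ∀ j, 0 ≤ v j := hv
  have hq' : 0 ≤ 1 - q := sub_nonneg.2 hq.2
  fin_cases i <;> simp only [Fin.zero_eta, Fin.mk_one, Fin.reduceFinMk] at hvi <;>
    simp only [sairsField, hvi, mul_zero, zero_mul, add_zero, zero_add, sub_zero]
  · exact mul_nonneg hδ (hv 3)
  · exact mul_nonneg (mul_nonneg (mul_nonneg hq.1 hβ) (hv 0)) (hv 2)
  · exact add_nonneg (mul_nonneg (mul_nonneg (mul_nonneg hq' hβ) (hv 0)) (hv 1))
      (mul_nonneg hσ (hv 1))
  · exact add_nonneg (mul_nonneg hκ (hv 1)) (mul_nonneg hγ (hv 2))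

theorem contDiff_sairsField : ContDiff ℝ 1 (sairsField β σ γ κ δ q) := by
  refine contDiff_pi.2 fun i => ?_
  fin_cases i <;>
    simp only [sairsField, Fin.zero_eta, Fin.mk_one, Fin.reduceFinMk, Matrix.cons_val_zero,
      Matrix.cons_val_one, Matrix.cons_val] <;>
    fun_prop

variable {S A I R : ℝ → ℝ}

theorem sairs_nonneg (hβ : 0 ≤ β) (hσ : 0 ≤ σ) (hγ : 0 ≤ γ) (hκ : 0 ≤ κ) (hδ : 0 ≤ δ)
    (hq : q ∈ Icc (0 : ℝ) 1)
    (hS : ∀ t ≥ (0 : ℝ), HasDerivAt S (-β * S t * (A t + I t) + δ * R t) t)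
    (hA : ∀ t ≥ (0 : ℝ), HasDerivAt A (q * β * S t * (A t + I t) - (σ + κ) * A t) t)
    (hI : ∀ t ≥ (0 : ℝ),
      HasDerivAt I ((1 - q) * β * S t * (A t + I t) + σ * A t - γ * I t) t)
    (hR : ∀ t ≥ (0 : ℝ), HasDerivAt R (κ * A t + γ * I t - δ * R t) t)
    (h0 : 0 ≤ S 0 ∧ 0 ≤ A 0 ∧ 0 ≤ I 0 ∧ 0 ≤ R 0) {t : ℝ} (ht : 0 ≤ t) :
    0 ≤ S t ∧ 0 ≤ A t ∧ 0 ≤ I t ∧ 0 ≤ R t := by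
  set x : ℝ → Fin 4 → ℝ := fun t => ![S t, A t, I t, R t]
  have hx : ∀ t ≥ 0, HasDerivAt x (sairsField β σ γ κ δ q (x t)) t := fun t ht =>
    hasDerivAt_pi.2 fun i => by
      fin_cases i
      exacts [hS t ht, hA t ht, hI t ht, hR t ht]
  have hx0 : 0 ≤ x 0 := fun i => by fin_cases i <;> simp [x, h0]
  have := (quasiPositive_sairsField hβ hσ hγ hκ hδ hq).nonneg_of_hasDerivAt
    contDiff_sairsField.locallyLipschitz hx hx0 ht
  exact ⟨this 0, this 1, this 2, this 3⟩

theorem sairs_sum_eq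
    (hS : ∀ t ≥ (0 : ℝ), HasDerivAt S (-β * S t * (A t + I t) + δ * R t) t)
    (hA : ∀ t ≥ (0 : ℝ), HasDerivAt A (q * β * S t * (A t + I t) - (σ + κ) * A t) t)
    (hI : ∀ t ≥ (0 : ℝ),
      HasDerivAt I ((1 - q) * β * S t * (A t + I t) + σ * A t - γ * I t) t)
    (hR : ∀ t ≥ (0 : ℝ), HasDerivAt R (κ * A t + γ * I t - δ * R t) t)
    {t : ℝ} (ht : 0 ≤ t) : S t + A t + I t + R t = S 0 + A 0 + I 0 + R 0 := by
  have hderiv : ∀ s ≥ 0, HasDerivAt (fun s => S s + A s + I s + R s) 0 s := fun s hs =>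
    ((((hS s hs).add (hA s hs)).add (hI s hs)).add (hR s hs)).congr_deriv (by ring)
  exact constant_of_has_deriv_right_zero
    (fun s hs => (hderiv s hs.1).continuousAt.continuousWithinAt)
    (fun s hs => (hderiv s hs.1).hasDerivWithinAt) t ⟨ht, le_rfl⟩

theorem exists_sairs_lyapunov (hβ : 0 ≤ β) (hσ : 0 ≤ σ) (hγ : 0 < γ) (hκ : 0 < κ) (hδ : 0 < δ)
    (hq : q ∈ Icc (0 : ℝ) 1) (hR0 : β * (q * γ + (1 - q) * κ + σ) < γ * (κ + σ)) :
    ∃ η > 0, ∃ c > 0, ∀ s a i r : ℝ, s ≤ 1 → 0 ≤ a → 0 ≤ i → 0 ≤ r →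
      (γ + σ) * (q * β * s * (a + i) - (σ + κ) * a)
        + (σ + κ) * ((1 - q) * β * s * (a + i) + σ * a - γ * i)
        + η * (κ * a + γ * i - δ * r)
        ≤ -c * ((γ + σ) * a + (σ + κ) * i + η * r) := by
  set θ := q * γ + (1 - q) * κ + σ
  set D := γ * (κ + σ) - β * θ
  have hD : 0 < D := sub_pos.2 hR0
  have hθ : 0 ≤ β * θ := mul_nonneg hβ (by nlinarith [hq.1, hq.2])
  set η := D / (2 * (κ + γ))
  set c := min (D / (2 * (γ + σ + κ))) δ
  have hη : η * (κ + γ) = D / 2 := by simp only [η]; field_simp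
  have hcD : c * (γ + σ + κ) ≤ D / 2 :=
    (le_div_iff₀ (by positivity)).1 ((min_le_left _ _).trans_eq (by field_simp))
  have hcδ : c ≤ δ := min_le_right _ _
  have hc : 0 < c := lt_min (by positivity) hδ
  refine ⟨η, by positivity, c, hc, fun s a i r hs ha hi hr => ?_⟩
  have hsD : β * θ * s - γ * (κ + σ) ≤ -D := by nlinarith
  calc _ = (β * θ * s - γ * (κ + σ)) * (a + i) + η * (κ * a + γ * i) - η * δ * r := by ring
    _ ≤ -D * (a + i) + η * (κ + γ) * (a + i) - η * δ * r := by
        gcongr ?_ + ?_ - _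
        · exact mul_le_mul_of_nonneg_right hsD (add_nonneg ha hi)
        · nlinarith [mul_nonneg hκ.le hi, mul_nonneg hγ.le ha]
    _ = -(D / 2) * (a + i) - η * δ * r := by rw [hη]; ring
    _ ≤ -(c * (γ + σ + κ)) * (a + i) - η * c * r := by
        gcongr
    _ ≤ -c * ((γ + σ) * a + (σ + κ) * i + η * r) := by
        nlinarith [mul_nonneg hc.le (add_nonneg (mul_nonneg hκ.le ha) (mul_nonneg hγ.le hi))]

theorem sairs_tendsto_zero (hβ : 0 ≤ β) (hσ : 0 ≤ σ) (hγ : 0 < γ) (hκ : 0 < κ) (hδ : 0 < δ)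
    (hq : q ∈ Icc (0 : ℝ) 1) (hR0 : β * (q * γ + (1 - q) * κ + σ) < γ * (κ + σ))
    (hA : ∀ t ≥ (0 : ℝ), HasDerivAt A (q * β * S t * (A t + I t) - (σ + κ) * A t) t)
    (hI : ∀ t ≥ (0 : ℝ),
      HasDerivAt I ((1 - q) * β * S t * (A t + I t) + σ * A t - γ * I t) t)
    (hR : ∀ t ≥ (0 : ℝ), HasDerivAt R (κ * A t + γ * I t - δ * R t) t)
    (hinv : ∀ t ≥ (0 : ℝ), S t ≤ 1 ∧ 0 ≤ A t ∧ 0 ≤ I t ∧ 0 ≤ R t) :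
    Tendsto A atTop (𝓝 0) ∧ Tendsto I atTop (𝓝 0) ∧ Tendsto R atTop (𝓝 0) := by
  obtain ⟨η, hη, c, hc, hV'⟩ := exists_sairs_lyapunov hβ hσ hγ hκ hδ hq hR0
  set V : ℝ → ℝ := fun t => (γ + σ) * A t + (σ + κ) * I t + η * R t
  have hV : Tendsto V atTop (𝓝 0) := by
    refine tendsto_zero_of_hasDerivAt_le_neg_mul
      (fun t ht => (((hA t ht).const_mul _).add ((hI t ht).const_mul _)).add
        ((hR t ht).const_mul _)) (fun t ht => ?_) hc (fun t ht => ?_)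
    · obtain ⟨hSt, hAt, hIt, hRt⟩ := hinv t ht
      exact hV' _ _ _ _ hSt hAt hIt hRt
    · obtain ⟨-, hAt, hIt, hRt⟩ := hinv t ht
      positivity
  have hinv' := eventually_ge_atTop 0 |>.mono hinv
  refine ⟨tendsto_zero_of_nonneg_of_mul_le (w := γ + σ) (by positivity)
      (hinv'.mono fun t h => h.2.1) (hinv'.mono fun t ⟨_, hAt, hIt, hRt⟩ => ?_) hV,
    tendsto_zero_of_nonneg_of_mul_le (w := σ + κ) (by positivity)
      (hinv'.mono fun t h => h.2.2.1) (hinv'.mono fun t ⟨_, hAt, hIt, hRt⟩ => ?_) hV,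
    tendsto_zero_of_nonneg_of_mul_le hη
      (hinv'.mono fun t h => h.2.2.2) (hinv'.mono fun t ⟨_, hAt, hIt, hRt⟩ => ?_) hV⟩ <;>
  · simp only [V]
    nlinarith [mul_nonneg hη.le hRt, mul_nonneg (add_nonneg hγ.le hσ) hAt,
      mul_nonneg (add_nonneg hσ hκ.le) hIt]

end SAIRS

/-- Global asymptotic stability of the disease-free equilibrium of the group
SAIR(S) model when `R₀ < 1`: every solution starting in the unit simplex converges to
`(S, A, I, R) = (1, 0, 0, 0)` as `t → ∞`. -/
theorem sairs_dfe_GAS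
    (β σ γ κ δ q : ℝ)
    (hβ : 0 < β) (hσ : 0 < σ) (hγ : 0 < γ) (hκ : 0 < κ) (hδ : 0 < δ)
    (hq : q ∈ Set.Icc (0 : ℝ) 1)
    (hR0 : max (β / (κ + γ + σ)) (β * (q * γ + (1 - q) * κ + σ) / (γ * (κ + σ))) < 1)
    (S A I R : ℝ → ℝ)
    (hS : ∀ t ≥ (0 : ℝ), HasDerivAt S (-β * S t * (A t + I t) + δ * R t) t)
    (hA : ∀ t ≥ (0 : ℝ), HasDerivAt A (q * β * S t * (A t + I t) - (σ + κ) * A t) t)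
    (hI : ∀ t ≥ (0 : ℝ),
      HasDerivAt I ((1 - q) * β * S t * (A t + I t) + σ * A t - γ * I t) t)
    (hR : ∀ t ≥ (0 : ℝ), HasDerivAt R (κ * A t + γ * I t - δ * R t) t)
    (h0 : S 0 ∈ Set.Icc (0 : ℝ) 1 ∧ A 0 ∈ Set.Icc (0 : ℝ) 1 ∧
      I 0 ∈ Set.Icc (0 : ℝ) 1 ∧ R 0 ∈ Set.Icc (0 : ℝ) 1)
    (hsum0 : S 0 + A 0 + I 0 + R 0 = 1) :
    Tendsto S atTop (nhds 1) ∧ Tendsto A atTop (nhds 0) ∧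
      Tendsto I atTop (nhds 0) ∧ Tendsto R atTop (nhds 0) := by
  have hR0' : β * (q * γ + (1 - q) * κ + σ) < γ * (κ + σ) :=
    (div_lt_one (by positivity)).1 (max_lt_iff.1 hR0).2
  have hnn : ∀ t ≥ 0, 0 ≤ S t ∧ 0 ≤ A t ∧ 0 ≤ I t ∧ 0 ≤ R t := fun t =>
    sairs_nonneg hβ.le hσ.le hγ.le hκ.le hδ.le hq hS hA hI hR
      ⟨h0.1.1, h0.2.1.1, h0.2.2.1.1, h0.2.2.2.1⟩
  have hsum : ∀ t ≥ 0, S t + A t + I t + R t = 1 := fun t ht =>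
    (sairs_sum_eq hS hA hI hR ht).trans hsum0
  obtain ⟨hAlim, hIlim, hRlim⟩ := sairs_tendsto_zero hβ.le hσ.le hγ hκ hδ hq hR0' hA hI hR
    fun t ht => ⟨by linarith [hsum t ht, hnn t ht], (hnn t ht).2⟩
  refine ⟨?_, hAlim, hIlim, hRlim⟩
  have hlim := ((tendsto_const_nhds (x := (1 : ℝ))).sub hAlim).sub hIlim |>.sub hRlim
  simp only [sub_zero] at hlim
  exact hlim.congr' (eventually_ge_atTop 0 |>.mono fun t ht => by linarith [hsum t ht])
end

section
/- Consider the group SAIR(S) model with β, σ, γ, κ > 0, δ = 0 and q ∈ [0,1]. If R₀ := max( β/(κ+γ+σ), β(qγ+(1−q)κ+σ)/(γ(κ+σ)) ) < 1, then for every solution (S, A, I, R) with initial condition satisfying S(0), A(0), I(0), R(0) ∈ [0,1] and S(0)+A(0)+I(0)+R(0) = 1, one has A(t) → 0 and I(t) → 0 as t → ∞; moreover, every point of the form (S,A,I,R) = (c_S, 0, 0, c_R) with c_S, c_R ≥ 0 and c_S + c_R = 1 is an equilibrium of the system. -/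
open Filter

section SairsAux
open Set Topology
set_option maxHeartbeats 1000000

/-- Right-slope bound for the negative part of a differentiable function. -/
lemma slope_negpart_bound {X : ℝ → ℝ} {x d c : ℝ} (hX : HasDerivAt X d x)
    (hc0 : 0 ≤ c) (hneg : X x ≤ 0 → -d ≤ c) {ε : ℝ} (hε : 0 < ε) :
    ∀ᶠ z in 𝓝[>] x, slope (fun t => max (-X t) 0) x z < c + ε := by
  have hslope : Tendsto (slope X x) (𝓝[>] x) (𝓝 d) :=
    (hasDerivAt_iff_tendsto_slope.1 hX).mono_left
      (nhdsWithin_mono x (fun z hz => ne_of_gt hz))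
  have hmem : ∀ᶠ z in 𝓝[>] x, x < z := self_mem_nhdsWithin
  rcases lt_trichotomy (X x) 0 with h | h | h
  · -- X x < 0
    have hev1 : ∀ᶠ z in 𝓝[>] x, d - ε < slope X x z :=
      hslope.eventually (eventually_gt_nhds (by linarith))
    have hev2 : ∀ᶠ z in 𝓝[>] x, X z < 0 :=
      (hX.continuousAt.eventually (eventually_lt_nhds h)).filter_mono nhdsWithin_le_nhds
    filter_upwards [hev1, hev2, hmem] with z h1 h2 h3
    have hzx : (0:ℝ) < z - x := by linarith
    have e1 : max (-X z) 0 = -X z := max_eq_left (by linarith)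
    have e2 : max (-X x) 0 = -X x := max_eq_left (by linarith)
    have hs : slope X x z = (X z - X x) / (z - x) := slope_def_field X x z
    rw [slope_def_field, e1, e2]
    have hc : -d ≤ c := hneg h.le
    have : (-X z - -X x) / (z - x) = -((X z - X x) / (z - x)) := by ring
    rw [this, ← hs]
    linarith
  · -- X x = 0
    have hev1 : ∀ᶠ z in 𝓝[>] x, d - ε < slope X x z :=
      hslope.eventually (eventually_gt_nhds (by linarith))
    filter_upwards [hev1, hmem] with z h1 h3
    have hzx : (0:ℝ) < z - x := by linarith
    have e2 : max (-X x) 0 = 0 := by rw [h]; simp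
    have hs : slope X x z = (X z - X x) / (z - x) := slope_def_field X x z
    rw [slope_def_field, e2, sub_zero]
    have hc : -d ≤ c := hneg h.le
    rcases le_or_gt (X z) 0 with h4 | h4
    · have e1 : max (-X z) 0 = -X z := max_eq_left (by linarith)
      rw [e1]
      have : -X z / (z - x) = -((X z - X x) / (z - x)) := by rw [h]; ring
      rw [this, ← hs]
      linarith
    · have e1 : max (-X z) 0 = 0 := max_eq_right (by linarith)
      rw [e1]
      have : (0:ℝ) / (z - x) = 0 := zero_div _
      rw [this]; linarith
  · -- 0 < X x
    have hev2 : ∀ᶠ z in 𝓝[>] x, 0 < X z :=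
      (hX.continuousAt.eventually (eventually_gt_nhds h)).filter_mono nhdsWithin_le_nhds
    filter_upwards [hev2, hmem] with z h2 h3
    have e1 : max (-X z) 0 = 0 := max_eq_right (by linarith)
    have e2 : max (-X x) 0 = 0 := max_eq_right (by linarith)
    rw [slope_def_field, e1, e2]
    simp
    positivity

lemma prod_bound {s a i sm am im : ℝ} (hs2 : s ≤ 2) (ha2 : a ≤ 2) (hi2 : i ≤ 2)
    (hsm : -s ≤ sm) (hsm0 : 0 ≤ sm) (hsm2 : sm ≤ 2)
    (ham : -a ≤ am) (ham0 : 0 ≤ am) (ham2 : am ≤ 2)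
    (him : -i ≤ im) (him0 : 0 ≤ im) (him2 : im ≤ 2) :
    -(s * (a + i)) ≤ 8 * sm + 4 * am + 4 * im := by
  nlinarith [mul_nonneg (by linarith : (0:ℝ) ≤ s + sm) (by linarith : (0:ℝ) ≤ a + am),
    mul_nonneg (by linarith : (0:ℝ) ≤ s + sm) (by linarith : (0:ℝ) ≤ i + im),
    mul_nonneg ham0 (by linarith : (0:ℝ) ≤ 2 - s),
    mul_nonneg him0 (by linarith : (0:ℝ) ≤ 2 - s),
    mul_nonneg hsm0 (by linarith : (0:ℝ) ≤ 2 - a),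
    mul_nonneg hsm0 (by linarith : (0:ℝ) ≤ 2 - i),
    mul_nonneg hsm0 (by linarith : (0:ℝ) ≤ 2 - am),
    mul_nonneg hsm0 (by linarith : (0:ℝ) ≤ 2 - im)]

lemma qscale {q β u V : ℝ} (hq0 : 0 ≤ q) (hq1 : q ≤ 1) (hβ : 0 ≤ β) (hu : u ≤ V)
    (hV : 0 ≤ V) : q * β * u ≤ β * V := by
  have h1 : q * u ≤ V := by
    nlinarith [mul_le_mul_of_nonneg_left hu hq0, mul_nonneg (sub_nonneg.2 hq1) hV]
  nlinarith [mul_le_mul_of_nonneg_left h1 hβ]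

lemma sairs_invariant
    (β σ γ κ q : ℝ) (hβ : 0 < β) (hσ : 0 < σ) (hγ : 0 < γ) (hκ : 0 < κ)
    (hq0 : 0 ≤ q) (hq1 : q ≤ 1)
    (S A I R : ℝ → ℝ)
    (hS : ∀ t ≥ (0:ℝ), HasDerivAt S (-β * S t * (A t + I t)) t)
    (hA : ∀ t ≥ (0:ℝ), HasDerivAt A (q * β * S t * (A t + I t) - (σ + κ) * A t) t)
    (hI : ∀ t ≥ (0:ℝ), HasDerivAt I ((1 - q) * β * S t * (A t + I t) + σ * A t - γ * I t) t)
    (hR : ∀ t ≥ (0:ℝ), HasDerivAt R (κ * A t + γ * I t) t)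
    (h0S : 0 ≤ S 0) (h0A : 0 ≤ A 0) (h0I : 0 ≤ I 0) (h0R : 0 ≤ R 0)
    (hsum0 : S 0 + A 0 + I 0 + R 0 = 1) :
    ∀ t ≥ (0:ℝ), 0 ≤ S t ∧ 0 ≤ A t ∧ 0 ≤ I t ∧ 0 ≤ R t ∧
      S t + A t + I t + R t = 1 := by
  -- the sum is constant
  have hsum : ∀ t ≥ (0:ℝ), S t + A t + I t + R t = 1 := by
    intro t ht
    have hW : ∀ x ∈ Icc (0:ℝ) t, HasDerivWithinAt (fun u => S u + A u + I u + R u) 0 (Ici x) x := by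
      intro x hx
      have h1 := ((((hS x hx.1).add (hA x hx.1)).add (hI x hx.1)).add (hR x hx.1))
      have h2 : -β * S x * (A x + I x) + (q * β * S x * (A x + I x) - (σ + κ) * A x) +
          ((1 - q) * β * S x * (A x + I x) + σ * A x - γ * I x) + (κ * A x + γ * I x) = 0 := by
        ring
      rw [h2] at h1
      exact h1.hasDerivWithinAt
    have hWc : ContinuousOn (fun u => S u + A u + I u + R u) (Icc (0:ℝ) t) := by
      intro x hx
      exact (((((hS x hx.1).add (hA x hx.1)).add (hI x hx.1)).add (hR x hx.1))).continuousAt.continuousWithinAt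
    have := constant_of_has_deriv_right_zero hWc (fun x hx => hW x ⟨hx.1, hx.2.le⟩) t
      ⟨ht, le_refl t⟩
    simpa [hsum0] using this
  -- continuity of everything on `Ici 0`
  have hScont : ContinuousOn S (Ici (0:ℝ)) := fun t ht => (hS t ht).continuousAt.continuousWithinAt
  have hAcont : ContinuousOn A (Ici (0:ℝ)) := fun t ht => (hA t ht).continuousAt.continuousWithinAt
  have hIcont : ContinuousOn I (Ici (0:ℝ)) := fun t ht => (hI t ht).continuousAt.continuousWithinAt
  have hRcont : ContinuousOn R (Ici (0:ℝ)) := fun t ht => (hR t ht).continuousAt.continuousWithinAt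
  obtain ⟨F, hFdef⟩ : ∃ F : ℝ → ℝ,
      F = fun t => max (-S t) 0 + max (-A t) 0 + max (-I t) 0 + max (-R t) 0 := ⟨_, rfl⟩
  have hFnonneg : ∀ t, 0 ≤ F t := by
    intro t
    have := le_max_right (-S t) 0
    have := le_max_right (-A t) 0
    have := le_max_right (-I t) 0
    have := le_max_right (-R t) 0
    simp only [hFdef]
    linarith
  have hFcont : ContinuousOn F (Ici (0:ℝ)) := by
    rw [hFdef]
    exact (((hScont.neg.sup continuousOn_const).add (hAcont.neg.sup continuousOn_const)).add
      (hIcont.neg.sup continuousOn_const)).add (hRcont.neg.sup continuousOn_const)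
  have hF0 : F 0 = 0 := by
    simp only [hFdef]
    rw [max_eq_right (by linarith), max_eq_right (by linarith),
      max_eq_right (by linarith), max_eq_right (by linarith)]
    ring
  obtain ⟨K, hKdef⟩ : ∃ K : ℝ, K = 20 * β + σ + γ + κ + 1 := ⟨_, rfl⟩
  have hKpos : 0 < K := by rw [hKdef]; positivity
  -- key slope estimate
  have key : ∀ x ≥ (0:ℝ), |S x| ≤ 2 → |A x| ≤ 2 → |I x| ≤ 2 → |R x| ≤ 2 →
      ∀ r, K * F x < r → ∀ᶠ z in 𝓝[>] x, slope F x z < r := by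
    intro x hx hSb hAb hIb hRb r hr
    obtain ⟨sm, hsm⟩ : ∃ u : ℝ, u = max (-S x) 0 := ⟨_, rfl⟩
    obtain ⟨am, ham⟩ : ∃ u : ℝ, u = max (-A x) 0 := ⟨_, rfl⟩
    obtain ⟨im, him⟩ : ∃ u : ℝ, u = max (-I x) 0 := ⟨_, rfl⟩
    obtain ⟨rm, hrm⟩ : ∃ u : ℝ, u = max (-R x) 0 := ⟨_, rfl⟩
    have hsm1 : -S x ≤ sm := hsm ▸ le_max_left _ _
    have hsm0 : 0 ≤ sm := hsm ▸ le_max_right _ _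
    have ham1 : -A x ≤ am := ham ▸ le_max_left _ _
    have ham0 : 0 ≤ am := ham ▸ le_max_right _ _
    have him1 : -I x ≤ im := him ▸ le_max_left _ _
    have him0 : 0 ≤ im := him ▸ le_max_right _ _
    have hrm0 : 0 ≤ rm := hrm ▸ le_max_right _ _
    obtain ⟨hS2', hS2⟩ := abs_le.1 hSb
    obtain ⟨hA2', hA2⟩ := abs_le.1 hAb
    obtain ⟨hI2', hI2⟩ := abs_le.1 hIb
    have hsm2 : sm ≤ 2 := hsm ▸ max_le (by linarith) (by norm_num)
    have ham2 : am ≤ 2 := ham ▸ max_le (by linarith) (by norm_num)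
    have him2 : im ≤ 2 := him ▸ max_le (by linarith) (by norm_num)
    have hFx : F x = sm + am + im + rm := by
      simp only [hFdef]; rw [hsm, ham, him, hrm]
    obtain ⟨ε', hε'⟩ : ∃ u : ℝ, u = (r - K * F x) / 5 := ⟨_, rfl⟩
    have hε'pos : 0 < ε' := by
      rw [hε']
      exact div_pos (by linarith) (by norm_num)
    have hprod : -(S x * (A x + I x)) ≤ 8 * sm + 4 * am + 4 * im :=
      prod_bound hS2 hA2 hI2 hsm1 hsm0 hsm2 ham1 ham0 ham2 him1 him0 him2
    have hVpos : (0:ℝ) ≤ 8 * sm + 4 * am + 4 * im := by linarith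
    -- component S
    have e1 : ∀ᶠ z in 𝓝[>] x, slope (fun t => max (-S t) 0) x z < 4 * β * sm + ε' := by
      refine slope_negpart_bound (hS x hx) (by positivity) ?_ hε'pos
      intro hneg
      have h1 : 0 ≤ β * (-S x) * (A x + I x + 4) :=
        mul_nonneg (mul_nonneg hβ.le (by linarith)) (by linarith)
      have h2 : 4 * β * (-S x) ≤ 4 * β * sm :=
        mul_le_mul_of_nonneg_left hsm1 (by positivity)
      nlinarith [h1, h2]
    -- component A
    have e2 : ∀ᶠ z in 𝓝[>] x, slope (fun t => max (-A t) 0) x z <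
        β * (8 * sm + 4 * am + 4 * im) + ε' := by
      refine slope_negpart_bound (hA x hx) (by positivity) ?_ hε'pos
      intro hneg
      have h2 : q * β * (-(S x * (A x + I x))) ≤ β * (8 * sm + 4 * am + 4 * im) :=
        qscale hq0 hq1 hβ.le hprod hVpos
      nlinarith [h2, mul_nonneg (by linarith : (0:ℝ) ≤ σ + κ) (by linarith : 0 ≤ -A x)]
    -- component I
    have e3 : ∀ᶠ z in 𝓝[>] x, slope (fun t => max (-I t) 0) x z <
        (β * (8 * sm + 4 * am + 4 * im) + σ * am) + ε' := by
      refine slope_negpart_bound (hI x hx) (by positivity) ?_ hε'pos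
      intro hneg
      have h2 : (1 - q) * β * (-(S x * (A x + I x))) ≤ β * (8 * sm + 4 * am + 4 * im) :=
        qscale (by linarith) (by linarith) hβ.le hprod hVpos
      have h3 : σ * (-A x) ≤ σ * am := mul_le_mul_of_nonneg_left ham1 hσ.le
      nlinarith [h2, h3, mul_nonneg hγ.le (by linarith : 0 ≤ -I x)]
    -- component R
    have e4 : ∀ᶠ z in 𝓝[>] x, slope (fun t => max (-R t) 0) x z < (κ * am + γ * im) + ε' := by
      refine slope_negpart_bound (hR x hx) (by positivity) ?_ hε'pos
      intro hneg
      have h2 : κ * (-A x) ≤ κ * am := mul_le_mul_of_nonneg_left ham1 hκ.le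
      have h3 : γ * (-I x) ≤ γ * im := mul_le_mul_of_nonneg_left him1 hγ.le
      linarith
    filter_upwards [e1, e2, e3, e4] with z h1 h2 h3 h4
    have hsplit : slope F x z = slope (fun t => max (-S t) 0) x z +
        slope (fun t => max (-A t) 0) x z + slope (fun t => max (-I t) 0) x z +
        slope (fun t => max (-R t) 0) x z := by
      simp only [hFdef, slope_def_field]
      ring
    have hsumc : 4 * β * sm + β * (8 * sm + 4 * am + 4 * im) +
        (β * (8 * sm + 4 * am + 4 * im) + σ * am) + (κ * am + γ * im) ≤ K * F x := by
      rw [hFx, hKdef]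
      nlinarith [mul_nonneg (by linarith : (0:ℝ) ≤ σ + γ + κ + 1) hsm0,
        mul_nonneg (by linarith : (0:ℝ) ≤ 12 * β + γ + 1) ham0,
        mul_nonneg (by linarith : (0:ℝ) ≤ 12 * β + σ + κ + 1) him0,
        mul_nonneg hKpos.le hrm0]
    rw [hsplit]
    have h5 : 5 * ε' = r - K * F x := by rw [hε']; ring
    linarith
  -- F vanishes identically on [0, ∞)
  have hF0all : ∀ t ≥ (0:ℝ), F t = 0 := by
    by_contra hcon
    push_neg at hcon
    obtain ⟨t₀, ht₀0, ht₀⟩ := hcon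
    have ht₀pos : 0 < F t₀ := lt_of_le_of_ne (hFnonneg t₀) (Ne.symm ht₀)
    obtain ⟨E, hEdef⟩ : ∃ E : Set ℝ, E = {t | t ∈ Icc (0:ℝ) t₀ ∧ 0 < F t} := ⟨_, rfl⟩
    have hEne : E.Nonempty := ⟨t₀, by rw [hEdef]; exact ⟨⟨ht₀0, le_refl _⟩, ht₀pos⟩⟩
    have hEbdd : BddBelow E := ⟨0, fun t ht => by rw [hEdef] at ht; exact ht.1.1⟩
    obtain ⟨T, hTdef⟩ : ∃ T : ℝ, T = sInf E := ⟨_, rfl⟩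
    have hT0 : 0 ≤ T := by
      rw [hTdef]
      exact le_csInf hEne (fun t ht => by rw [hEdef] at ht; exact ht.1.1)
    have hTlb : ∀ t ∈ E, T ≤ t := fun t ht => hTdef ▸ csInf_le hEbdd ht
    have hTt₀ : T ≤ t₀ := hTlb t₀ (by rw [hEdef]; exact ⟨⟨ht₀0, le_refl _⟩, ht₀pos⟩)
    have hzero_lt : ∀ z ∈ Ico (0:ℝ) T, F z = 0 := by
      intro z hz
      by_contra hz'
      have hzpos : 0 < F z := lt_of_le_of_ne (hFnonneg z) (Ne.symm hz')
      have : z ∈ E := by rw [hEdef]; exact ⟨⟨hz.1, le_trans hz.2.le hTt₀⟩, hzpos⟩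
      exact absurd (hTlb z this) (not_le.2 hz.2)
    have hFT : F T = 0 := by
      rcases eq_or_lt_of_le hT0 with h | h
      · rw [← h]; exact hF0
      · have hcl : T ∈ closure (Ico (0:ℝ) T) := by
          rw [closure_Ico (ne_of_lt h)]
          exact ⟨hT0, le_refl T⟩
        have hnb : (𝓝[Ico (0:ℝ) T] T).NeBot := mem_closure_iff_nhdsWithin_neBot.1 hcl
        have h1 : Filter.Tendsto F (𝓝[Ico (0:ℝ) T] T) (𝓝 (F T)) :=
          (hFcont T hT0).mono (fun z hz => hz.1)
        have h2 : ∀ᶠ z in 𝓝[Ico (0:ℝ) T] T, F z = 0 :=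
          eventually_mem_nhdsWithin.mono (fun z hz => hzero_lt z hz)
        have h3 : Filter.Tendsto F (𝓝[Ico (0:ℝ) T] T) (𝓝 0) :=
          Filter.Tendsto.congr' (Filter.EventuallyEq.symm h2) tendsto_const_nhds
        exact tendsto_nhds_unique h1 h3
    -- components at T lie in [0,1]
    have hcomp : 0 ≤ S T ∧ 0 ≤ A T ∧ 0 ≤ I T ∧ 0 ≤ R T := by
      have h1 := le_max_right (-S T) 0
      have h2 := le_max_right (-A T) 0
      have h3 := le_max_right (-I T) 0
      have h4 := le_max_right (-R T) 0
      have h5 := le_max_left (-S T) 0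
      have h6 := le_max_left (-A T) 0
      have h7 := le_max_left (-I T) 0
      have h8 := le_max_left (-R T) 0
      have h9 : max (-S T) 0 + max (-A T) 0 + max (-I T) 0 + max (-R T) 0 = 0 := by
        have h := hFT; rw [hFdef] at h; exact h
      constructor
      · linarith
      constructor
      · linarith
      constructor
      · linarith
      · linarith
    have hsumT := hsum T hT0
    have hST1 : |S T| ≤ 1 := abs_le.2 ⟨by linarith [hcomp.1, hcomp.2.1, hcomp.2.2.1, hcomp.2.2.2],
      by linarith [hcomp.1, hcomp.2.1, hcomp.2.2.1, hcomp.2.2.2]⟩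
    have hAT1 : |A T| ≤ 1 := abs_le.2 ⟨by linarith [hcomp.1, hcomp.2.1, hcomp.2.2.1, hcomp.2.2.2],
      by linarith [hcomp.1, hcomp.2.1, hcomp.2.2.1, hcomp.2.2.2]⟩
    have hIT1 : |I T| ≤ 1 := abs_le.2 ⟨by linarith [hcomp.1, hcomp.2.1, hcomp.2.2.1, hcomp.2.2.2],
      by linarith [hcomp.1, hcomp.2.1, hcomp.2.2.1, hcomp.2.2.2]⟩
    have hRT1 : |R T| ≤ 1 := abs_le.2 ⟨by linarith [hcomp.1, hcomp.2.1, hcomp.2.2.1, hcomp.2.2.2],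
      by linarith [hcomp.1, hcomp.2.1, hcomp.2.2.1, hcomp.2.2.2]⟩
    -- choose a small interval to the right of T where all components are bounded by 2
    have hev : ∀ᶠ z in 𝓝 T, |S z| < 2 ∧ |A z| < 2 ∧ |I z| < 2 ∧ |R z| < 2 := by
      have e1 : ∀ᶠ z in 𝓝 T, |S z| < 2 :=
        ((hS T hT0).continuousAt.abs).eventually
          (eventually_lt_nhds (show |S T| < 2 by linarith [hST1]))
      have e2 : ∀ᶠ z in 𝓝 T, |A z| < 2 :=
        ((hA T hT0).continuousAt.abs).eventually
          (eventually_lt_nhds (show |A T| < 2 by linarith [hAT1]))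
      have e3 : ∀ᶠ z in 𝓝 T, |I z| < 2 :=
        ((hI T hT0).continuousAt.abs).eventually
          (eventually_lt_nhds (show |I T| < 2 by linarith [hIT1]))
      have e4 : ∀ᶠ z in 𝓝 T, |R z| < 2 :=
        ((hR T hT0).continuousAt.abs).eventually
          (eventually_lt_nhds (show |R T| < 2 by linarith [hRT1]))
      filter_upwards [e1, e2, e3, e4] with z h1 h2 h3 h4
      exact ⟨h1, h2, h3, h4⟩
    rw [Metric.eventually_nhds_iff] at hev
    obtain ⟨dd, hdd, hball⟩ := hev
    obtain ⟨b, hbdef⟩ : ∃ b : ℝ, b = T + dd / 2 := ⟨_, rfl⟩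
    have hTb : T < b := by rw [hbdef]; linarith
    have hbnd : ∀ x ∈ Icc T b, |S x| ≤ 2 ∧ |A x| ≤ 2 ∧ |I x| ≤ 2 ∧ |R x| ≤ 2 := by
      intro x hx
      have hd : dist x T < dd := by
        rw [Real.dist_eq, abs_of_nonneg (by linarith [hx.1])]
        rw [hbdef] at hx
        linarith [hx.2]
      obtain ⟨u1, u2, u3, u4⟩ := hball hd
      exact ⟨u1.le, u2.le, u3.le, u4.le⟩
    -- fencing: for every ε > 0, F ≤ ε exp(2K(z-T)) on [T,b]
    have hfence : ∀ ε : ℝ, 0 < ε → ∀ z ∈ Icc T b, F z ≤ ε * Real.exp (2 * K * (z - T)) := by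
      intro ε hε
      have hB : ∀ y : ℝ, HasDerivAt (fun z => ε * Real.exp (2 * K * (z - T)))
          (ε * (Real.exp (2 * K * (y - T)) * (2 * K))) y := by
        intro y
        have h1 : HasDerivAt (fun z : ℝ => 2 * K * (z - T)) (2 * K) y := by
          simpa using ((hasDerivAt_id y).sub_const T).const_mul (2 * K)
        exact ((Real.hasDerivAt_exp _).comp y h1).const_mul ε
      have hf' : ∀ x ∈ Ico T b, ∀ r, K * F x < r →
          ∃ᶠ z in 𝓝[>] x, slope F x z < r := by
        intro x hx r hr
        obtain ⟨u1, u2, u3, u4⟩ := hbnd x ⟨hx.1, hx.2.le⟩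
        exact (key x (le_trans hT0 hx.1) u1 u2 u3 u4 r hr).frequently
      have hbound : ∀ x ∈ Ico T b, F x = ε * Real.exp (2 * K * (x - T)) →
          K * F x < ε * (Real.exp (2 * K * (x - T)) * (2 * K)) := by
        intro x hx heq
        have hFxpos : 0 < F x := by rw [heq]; positivity
        nlinarith [mul_pos hKpos hFxpos]
      have ha : F T ≤ ε * Real.exp (2 * K * (T - T)) := by
        rw [hFT]; positivity
      exact fun z hz => image_le_of_liminf_slope_right_lt_deriv_boundary
        (hFcont.mono (fun u hu => le_trans hT0 hu.1)) hf' ha hB hbound hz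
    -- derive the contradiction
    obtain ⟨t₁, ht₁E, ht₁b⟩ : ∃ t₁ ∈ E, t₁ < b := exists_lt_of_csInf_lt hEne (by rw [← hTdef]; exact hTb)
    have ht₁T : T ≤ t₁ := hTlb t₁ ht₁E
    have ht₁pos : 0 < F t₁ := by rw [hEdef] at ht₁E; exact ht₁E.2
    obtain ⟨ε₁, hε₁⟩ : ∃ u : ℝ, u = F t₁ / (2 * Real.exp (2 * K * (t₁ - T))) := ⟨_, rfl⟩
    have hε₁pos : 0 < ε₁ := by rw [hε₁]; positivity
    have := hfence ε₁ hε₁pos t₁ ⟨ht₁T, ht₁b.le⟩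
    rw [hε₁] at this
    have hexp : 0 < Real.exp (2 * K * (t₁ - T)) := Real.exp_pos _
    rw [div_mul_eq_mul_div, mul_comm] at this
    have h2 : Real.exp (2 * K * (t₁ - T)) * F t₁ / (2 * Real.exp (2 * K * (t₁ - T))) = F t₁ / 2 := by
      field_simp
    rw [h2] at this
    linarith
  -- conclude
  intro t ht
  have hFt := hF0all t ht
  have h1 := le_max_right (-S t) 0
  have h2 := le_max_right (-A t) 0
  have h3 := le_max_right (-I t) 0
  have h4 := le_max_right (-R t) 0
  have h5 := le_max_left (-S t) 0
  have h6 := le_max_left (-A t) 0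
  have h7 := le_max_left (-I t) 0
  have h8 := le_max_left (-R t) 0
  have h9 : max (-S t) 0 + max (-A t) 0 + max (-I t) 0 + max (-R t) 0 = 0 := by
    have h := hFt; rw [hFdef] at h; exact h
  refine ⟨by linarith, by linarith, by linarith, by linarith, hsum t ht⟩

end SairsAux

open Set Topology in
set_option maxHeartbeats 1000000 in
/-- For the group SAIR(S) model with permanent immunity (`δ = 0`) and
`R₀ < 1`, every solution starting in the unit simplex satisfies `A(t) → 0` and
`I(t) → 0` as `t → ∞`; moreover, every point `(c_S, 0, 0, c_R)` with `c_S, c_R ≥ 0`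
and `c_S + c_R = 1` is an equilibrium of the system. -/
theorem sairs_permanent_immunity_dfe
    (β σ γ κ δ q : ℝ)
    (hβ : 0 < β) (hσ : 0 < σ) (hγ : 0 < γ) (hκ : 0 < κ) (hδ : δ = 0)
    (hq : q ∈ Set.Icc (0 : ℝ) 1)
    (hR0 : max (β / (κ + γ + σ)) (β * (q * γ + (1 - q) * κ + σ) / (γ * (κ + σ))) < 1)
    (S A I R : ℝ → ℝ)
    (hS : ∀ t ≥ (0 : ℝ), HasDerivAt S (-β * S t * (A t + I t) + δ * R t) t)
    (hA : ∀ t ≥ (0 : ℝ), HasDerivAt A (q * β * S t * (A t + I t) - (σ + κ) * A t) t)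
    (hI : ∀ t ≥ (0 : ℝ),
      HasDerivAt I ((1 - q) * β * S t * (A t + I t) + σ * A t - γ * I t) t)
    (hR : ∀ t ≥ (0 : ℝ), HasDerivAt R (κ * A t + γ * I t - δ * R t) t)
    (h0 : S 0 ∈ Set.Icc (0 : ℝ) 1 ∧ A 0 ∈ Set.Icc (0 : ℝ) 1 ∧
      I 0 ∈ Set.Icc (0 : ℝ) 1 ∧ R 0 ∈ Set.Icc (0 : ℝ) 1)
    (hsum0 : S 0 + A 0 + I 0 + R 0 = 1) :
    (Tendsto A atTop (nhds 0) ∧ Tendsto I atTop (nhds 0)) ∧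
    (∀ cS cR : ℝ, 0 ≤ cS → 0 ≤ cR → cS + cR = 1 →
      -β * cS * ((0 : ℝ) + 0) + δ * cR = 0 ∧
      q * β * cS * ((0 : ℝ) + 0) - (σ + κ) * 0 = 0 ∧
      (1 - q) * β * cS * ((0 : ℝ) + 0) + σ * 0 - γ * 0 = 0 ∧
      κ * (0 : ℝ) + γ * 0 - δ * cR = 0) := by
  subst hδ
  obtain ⟨⟨h0S1, _⟩, ⟨h0A1, _⟩, ⟨h0I1, _⟩, ⟨h0R1, _⟩⟩ := h0
  have hS' : ∀ t ≥ (0:ℝ), HasDerivAt S (-β * S t * (A t + I t)) t := by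
    intro t ht; simpa using hS t ht
  have hR' : ∀ t ≥ (0:ℝ), HasDerivAt R (κ * A t + γ * I t) t := by
    intro t ht; simpa using hR t ht
  have hinv := sairs_invariant β σ γ κ q hβ hσ hγ hκ hq.1 hq.2 S A I R hS' hA hI hR'
    h0S1 h0A1 h0I1 h0R1 hsum0
  constructor
  · -- convergence
    have hc : β * (σ + q * γ + (1 - q) * κ) < γ * (σ + κ) := by
      have h2 := lt_of_le_of_lt (le_max_right _ _) hR0
      rw [div_lt_one (by positivity)] at h2
      nlinarith [h2]
    obtain ⟨lam, hlamdef⟩ : ∃ u : ℝ,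
        u = (γ * (σ + κ) - β * (σ + q * γ + (1 - q) * κ)) / (σ + γ + κ) := ⟨_, rfl⟩
    have hlam0 : 0 < lam := by
      rw [hlamdef]; exact div_pos (by linarith) (by linarith)
    have hlameq : lam * (σ + γ + κ) = γ * (σ + κ) - β * (σ + q * γ + (1 - q) * κ) := by
      rw [hlamdef]; field_simp
    obtain ⟨V, hVdef⟩ : ∃ V : ℝ → ℝ, V = fun t => (σ + γ) * A t + (σ + κ) * I t := ⟨_, rfl⟩
    have hVderiv : ∀ t ≥ (0:ℝ), HasDerivAt V
        ((σ + γ) * (q * β * S t * (A t + I t) - (σ + κ) * A t) +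
         (σ + κ) * ((1 - q) * β * S t * (A t + I t) + σ * A t - γ * I t)) t := by
      intro t ht
      rw [hVdef]
      exact ((hA t ht).const_mul (σ + γ)).add ((hI t ht).const_mul (σ + κ))
    have hVnonneg : ∀ t ≥ (0:ℝ), 0 ≤ V t := by
      intro t ht
      obtain ⟨_, h2, h3, _, _⟩ := hinv t ht
      simp only [hVdef]
      have u1 := mul_nonneg (by linarith : (0:ℝ) ≤ σ + γ) h2
      have u2 := mul_nonneg (by linarith : (0:ℝ) ≤ σ + κ) h3
      linarith
    have hVle : ∀ t ≥ (0:ℝ),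
        (σ + γ) * (q * β * S t * (A t + I t) - (σ + κ) * A t) +
        (σ + κ) * ((1 - q) * β * S t * (A t + I t) + σ * A t - γ * I t) ≤ -lam * V t := by
      intro t ht
      obtain ⟨h1, h2, h3, h4, h5⟩ := hinv t ht
      have hSle1 : S t ≤ 1 := by linarith
      have hAI : 0 ≤ A t + I t := by linarith
      have hq1' : (0:ℝ) ≤ 1 - q := by linarith [hq.2]
      have hcoef0 : (0:ℝ) ≤ σ + q * γ + (1 - q) * κ := by
        have u1 := mul_nonneg hq.1 hγ.le
        have u2 := mul_nonneg hq1' hκ.le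
        linarith
      have hcoef : (0:ℝ) ≤ (σ + q * γ + (1 - q) * κ) * β := mul_nonneg hcoef0 hβ.le
      have hkey : (σ + q * γ + (1 - q) * κ) * β * (S t * (A t + I t)) ≤
          (σ + q * γ + (1 - q) * κ) * β * (A t + I t) := by
        apply mul_le_mul_of_nonneg_left _ hcoef
        nlinarith [mul_nonneg (by linarith : (0:ℝ) ≤ 1 - S t) hAI]
      simp only [hVdef]
      have hid : (σ + γ) * (q * β * S t * (A t + I t) - (σ + κ) * A t) +
          (σ + κ) * ((1 - q) * β * S t * (A t + I t) + σ * A t - γ * I t) =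
          (σ + q * γ + (1 - q) * κ) * β * (S t * (A t + I t)) -
            γ * (σ + κ) * (A t + I t) := by ring
      rw [hid]
      have hstep : (σ + q * γ + (1 - q) * κ) * β * (A t + I t) -
          γ * (σ + κ) * (A t + I t) = -(lam * (σ + γ + κ)) * (A t + I t) := by
        linear_combination (A t + I t) * hlameq
      nlinarith [hkey, hstep, mul_nonneg hlam0.le (mul_nonneg hκ.le h2),
        mul_nonneg hlam0.le (mul_nonneg hγ.le h3)]
    -- g is antitone
    obtain ⟨g, hgdef⟩ : ∃ g : ℝ → ℝ, g = fun t => V t * Real.exp (lam * t) := ⟨_, rfl⟩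
    have hgderiv : ∀ t ≥ (0:ℝ), HasDerivAt g
        (((σ + γ) * (q * β * S t * (A t + I t) - (σ + κ) * A t) +
          (σ + κ) * ((1 - q) * β * S t * (A t + I t) + σ * A t - γ * I t)) *
            Real.exp (lam * t) + V t * (Real.exp (lam * t) * lam)) t := by
      intro t ht
      rw [hgdef]
      have hexp : HasDerivAt (fun u => Real.exp (lam * u)) (Real.exp (lam * t) * lam) t := by
        have h1 : HasDerivAt (fun u : ℝ => lam * u) lam t := by
          simpa using (hasDerivAt_id t).const_mul lam
        exact (Real.hasDerivAt_exp _).comp t h1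
      exact (hVderiv t ht).mul hexp
    have hganti : AntitoneOn g (Ici (0:ℝ)) := by
      apply antitoneOn_of_deriv_nonpos (convex_Ici 0)
      · exact fun t ht => (hgderiv t ht).continuousAt.continuousWithinAt
      · intro t ht
        rw [interior_Ici] at ht
        exact (hgderiv t (le_of_lt ht)).differentiableAt.differentiableWithinAt
      · intro t ht
        rw [interior_Ici] at ht
        rw [(hgderiv t (le_of_lt ht)).deriv]
        have h1 := hVle t (le_of_lt ht)
        have h2 := Real.exp_pos (lam * t)
        have h4 := mul_le_mul_of_nonneg_right h1 h2.le
        nlinarith [h4]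
    have hVexp : ∀ t ≥ (0:ℝ), V t ≤ V 0 * Real.exp (-(lam * t)) := by
      intro t ht
      have h1 : g t ≤ g 0 := hganti (self_mem_Ici) ht ht
      simp only [hgdef, mul_zero, Real.exp_zero, mul_one] at h1
      have h2 := Real.exp_pos (lam * t)
      have h3 : V t ≤ V 0 / Real.exp (lam * t) := (le_div_iff₀ h2).2 (by linarith [h1])
      rw [Real.exp_neg, ← div_eq_mul_inv]
      exact h3
    have hVtend : Tendsto V atTop (nhds 0) := by
      have hb : Tendsto (fun t : ℝ => V 0 * Real.exp (-(lam * t))) atTop (nhds 0) := by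
        have h1 : Tendsto (fun t : ℝ => lam * t) atTop atTop :=
          Tendsto.const_mul_atTop hlam0 tendsto_id
        have h2 : Tendsto (fun t : ℝ => -(lam * t)) atTop atBot :=
          tendsto_neg_atTop_atBot.comp h1
        have h3 : Tendsto (fun t : ℝ => Real.exp (-(lam * t))) atTop (nhds 0) :=
          Real.tendsto_exp_atBot.comp h2
        simpa using h3.const_mul (V 0)
      apply tendsto_of_tendsto_of_tendsto_of_le_of_le' tendsto_const_nhds hb
      · exact (eventually_ge_atTop 0).mono (fun t ht => hVnonneg t ht)
      · exact (eventually_ge_atTop 0).mono (fun t ht => hVexp t ht)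
    constructor
    · have hb : Tendsto (fun t => V t / (σ + γ)) atTop (nhds 0) := by
        simpa using hVtend.div_const (σ + γ)
      apply tendsto_of_tendsto_of_tendsto_of_le_of_le' tendsto_const_nhds hb
      · exact (eventually_ge_atTop 0).mono (fun t ht => (hinv t ht).2.1)
      · refine (eventually_ge_atTop 0).mono (fun t ht => ?_)
        obtain ⟨_, h2, h3, _, _⟩ := hinv t ht
        rw [le_div_iff₀ (by linarith)]
        simp only [hVdef]
        nlinarith
    · have hb : Tendsto (fun t => V t / (σ + κ)) atTop (nhds 0) := by
        simpa using hVtend.div_const (σ + κ)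
      apply tendsto_of_tendsto_of_tendsto_of_le_of_le' tendsto_const_nhds hb
      · exact (eventually_ge_atTop 0).mono (fun t ht => (hinv t ht).2.2.1)
      · refine (eventually_ge_atTop 0).mono (fun t ht => ?_)
        obtain ⟨_, h2, h3, _, _⟩ := hinv t ht
        rw [le_div_iff₀ (by linarith)]
        simp only [hVdef]
        nlinarith
  · intro cS cR _ _ _
    refine ⟨by ring, by ring, by ring, by ring⟩
end

section
/- Let β_A, β_I, σ, γ, κ > 0, δ > 0 and q ∈ [0,1], and let J^e be the 3×3 real matrix with rows (qβ_A−κ−σ, qβ_I, 0), ((1−q)β_A+σ, (1−q)β_I−γ, 0), (κ, γ, −δ). Then every complex eigenvalue of J^e has strictly negative real part if and only if R₀ := max( (qβ_A + (1−q)β_I)/(κ+γ+σ), (qβ_Aγ + β_I((1−q)κ+σ))/(γ(κ+σ)) ) < 1. -/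
/-- Routh–Hurwitz for a monic real quadratic `z² − t z + d`: all complex roots have
negative real part iff `t < 0` and `0 < d`. -/
lemma sairs_quad_neg_re (t d : ℝ) :
    (∀ z : ℂ, z^2 - t*z + d = 0 → z.re < 0) ↔ t < 0 ∧ 0 < d := by
  constructor
  · intro h
    by_contra hc
    rw [not_and_or, not_lt, not_lt] at hc
    rcases le_or_gt d 0 with hd | hd
    · set s := Real.sqrt (t^2 - 4*d) with hs
      have hs2 : s^2 = t^2 - 4*d := Real.sq_sqrt (by nlinarith)
      have hsn : s ≥ -t := by
        have : s ≥ |t| := by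
          rw [hs]
          calc |t| = Real.sqrt (t^2) := by rw [Real.sqrt_sq_eq_abs]
          _ ≤ _ := Real.sqrt_le_sqrt (by nlinarith)
        cases abs_cases t with
        | inl h' => nlinarith [abs_nonneg t]
        | inr h' => nlinarith
      set x : ℝ := (t + s)/2 with hx
      have hroot : x^2 - t*x + d = 0 := by rw [hx]; nlinarith
      have := h x (by exact_mod_cast congrArg (Complex.ofReal) hroot)
      simp at this
      linarith
    · rcases hc with hc | hc
      · rcases le_or_gt (t^2 - 4*d) 0 with hdisc | hdisc
        · set w := Real.sqrt (4*d - t^2)/2 with hw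
          have hw2 : w^2 = (4*d - t^2)/4 := by
            rw [hw, div_pow, Real.sq_sqrt (by linarith)]; norm_num
          set z : ℂ := (t/2 : ℝ) + (w:ℝ) * Complex.I with hz
          have hroot : z^2 - t*z + d = 0 := by
            rw [hz]
            have h4 : ((w^2 : ℝ) : ℂ) = ((4*d - t^2)/4 : ℝ) := by rw [hw2]
            rw [show ((t/2:ℝ):ℂ) + (w:ℂ)*Complex.I = ((t:ℂ)/2 + (w:ℂ)*Complex.I) by
              push_cast; ring]
            have : ((t:ℂ)/2 + (w:ℂ)*Complex.I)^2 - t*((t:ℂ)/2 + (w:ℂ)*Complex.I) + d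
                = -(t:ℂ)^2/4 - (w:ℂ)^2 + d := by ring_nf; rw [Complex.I_sq]; ring
            rw [this]
            rw [show -(t:ℂ)^2/4 - (w:ℂ)^2 + d = -((t^2:ℝ):ℂ)/4 - ((w^2:ℝ):ℂ) + d by
              push_cast; ring, h4]
            push_cast; ring
          have := h z hroot
          rw [hz] at this
          simp at this
          linarith
        · set s := Real.sqrt (t^2 - 4*d) with hs
          have hs2 : s^2 = t^2 - 4*d := Real.sq_sqrt (by linarith)
          have hsn : 0 ≤ s := Real.sqrt_nonneg _
          set x : ℝ := (t + s)/2 with hx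
          have hroot : x^2 - t*x + d = 0 := by rw [hx]; nlinarith
          have := h x (by exact_mod_cast congrArg (Complex.ofReal) hroot)
          simp at this
          linarith
      · linarith
  · rintro ⟨ht, hd⟩ z hz
    have h1 := congrArg Complex.re hz
    have h2 := congrArg Complex.im hz
    simp [pow_two, Complex.mul_re, Complex.mul_im] at h1 h2
    set x := z.re; set y := z.im
    rcases eq_or_ne y 0 with hy | hy
    · rw [hy] at h1
      by_contra hx
      push_neg at hx
      nlinarith
    · have hmul : y * (2*x - t) = 0 := by linarith [h2]
      have h2x : 2*x - t = 0 := by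
        rcases mul_eq_zero.mp hmul with h | h
        · exact absurd h hy
        · exact h
      linarith

/-- For the group SAIR(S) model with distinct transmission rates `β_A, β_I`
for asymptomatic- and symptomatic-infected individuals, all complex eigenvalues of the
Jacobian at the disease-free equilibrium have strictly negative real part if and only if
`R₀ = max( (qβ_A+(1−q)β_I)/(κ+γ+σ), (qβ_Aγ+β_I((1−q)κ+σ))/(γ(κ+σ)) ) < 1`. -/
theorem sairs_two_rate_dfe_stability_iff_R0
    (βA βI σ γ κ δ q : ℝ)
    (hβA : 0 < βA) (hβI : 0 < βI) (hσ : 0 < σ) (hγ : 0 < γ) (hκ : 0 < κ) (hδ : 0 < δ)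
    (hq : q ∈ Set.Icc (0 : ℝ) 1) :
    (∀ μ ∈ spectrum ℂ
        ((!![q * βA - κ - σ, q * βI, 0;
             (1 - q) * βA + σ, (1 - q) * βI - γ, 0;
             κ, γ, -δ] : Matrix (Fin 3) (Fin 3) ℝ).map (Complex.ofReal)),
      μ.re < 0) ↔
    max ((q * βA + (1 - q) * βI) / (κ + γ + σ))
        ((q * βA * γ + βI * ((1 - q) * κ + σ)) / (γ * (κ + σ))) < 1 := by
  set t : ℝ := q * βA + (1 - q) * βI - (κ + γ + σ) with ht
  set d : ℝ := γ * (κ + σ) - (q * βA * γ + βI * ((1 - q) * κ + σ)) with hd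
  set M : Matrix (Fin 3) (Fin 3) ℝ :=
    !![q * βA - κ - σ, q * βI, 0;
       (1 - q) * βA + σ, (1 - q) * βI - γ, 0;
       κ, γ, -δ] with hM
  have hspec : ∀ μ : ℂ, μ ∈ spectrum ℂ (M.map Complex.ofReal) ↔
      (μ + δ) * (μ^2 - t*μ + d) = 0 := by
    intro μ
    rw [spectrum.mem_iff, Algebra.algebraMap_eq_smul_one,
      Matrix.isUnit_iff_isUnit_det, isUnit_iff_ne_zero, not_ne_iff]
    constructor
    · intro h
      rw [← h, hM]
      simp [Matrix.det_fin_three, Matrix.sub_apply, Matrix.smul_apply,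
        Matrix.one_apply, Matrix.map_apply, ht, hd]
      ring
    · intro h
      rw [hM]
      simp [Matrix.det_fin_three, Matrix.sub_apply, Matrix.smul_apply,
        Matrix.one_apply, Matrix.map_apply]
      rw [← h, ht, hd]
      push_cast
      ring
  have key : (∀ μ ∈ spectrum ℂ (M.map Complex.ofReal), μ.re < 0) ↔
      (∀ z : ℂ, z^2 - t*z + d = 0 → z.re < 0) := by
    constructor
    · intro h z hz
      exact h z ((hspec z).mpr (by rw [hz, mul_zero]))
    · intro h μ hμ
      rcases mul_eq_zero.mp ((hspec μ).mp hμ) with h0 | h0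
      · have : μ = -(δ:ℂ) := by linear_combination h0
        rw [this]
        simp [hδ]
      · exact h μ h0
  rw [key, sairs_quad_neg_re, max_lt_iff, div_lt_one (by linarith),
    div_lt_one (by positivity)]
  constructor <;> rintro ⟨h1, h2⟩ <;> constructor <;> (rw [ht, hd] at * ; linarith)
end

section
/- Let β, σ, γ, κ > 0, δ > 0 and q ∈ [0,1], and define Ψ = γ(κ+σ), Φ = qγ + (1−q)κ + σ, C = βΦ − Ψ, D = δΦ + Ψ. Then the point (S^e, A^e, I^e, R^e) = ( Ψ/(βΦ), qδγC/(βΦD), δ((1−q)κ+σ)C/(βΦD), ΨC/(βΦD) ) is an equilibrium of the group SAIR(S) model: the right-hand sides of all four equations vanish at this point. -/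
/-- The endemic equilibrium point of the group SAIR(S) model: at
`(S^e, A^e, I^e, R^e) = ( Ψ/(βΦ), qδγC/(βΦD), δ((1−q)κ+σ)C/(βΦD), ΨC/(βΦD) )`,
with `Ψ = γ(κ+σ)`, `Φ = qγ+(1−q)κ+σ`, `C = βΦ−Ψ`, `D = δΦ+Ψ`, the right-hand sides of
all four equations of the model vanish. -/
theorem sairs_endemic_equilibrium
    (β σ γ κ δ q : ℝ)
    (hβ : 0 < β) (hσ : 0 < σ) (hγ : 0 < γ) (hκ : 0 < κ) (hδ : 0 < δ)
    (hq : q ∈ Set.Icc (0 : ℝ) 1)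
    (Ψ Φ C D Se Ae Ie Re : ℝ)
    (hΨ : Ψ = γ * (κ + σ)) (hΦ : Φ = q * γ + (1 - q) * κ + σ)
    (hC : C = β * Φ - Ψ) (hD : D = δ * Φ + Ψ)
    (hSe : Se = Ψ / (β * Φ))
    (hAe : Ae = q * δ * γ * C / (β * Φ * D))
    (hIe : Ie = δ * ((1 - q) * κ + σ) * C / (β * Φ * D))
    (hRe : Re = Ψ * C / (β * Φ * D)) :
    -β * Se * (Ae + Ie) + δ * Re = 0 ∧
    q * β * Se * (Ae + Ie) - (σ + κ) * Ae = 0 ∧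
    (1 - q) * β * Se * (Ae + Ie) + σ * Ae - γ * Ie = 0 ∧
    κ * Ae + γ * Ie - δ * Re = 0 := by
  obtain ⟨hq0, hq1⟩ := hq
  have hΦpos : 0 < Φ := by
    rw [hΦ]
    have : 0 ≤ q * γ := mul_nonneg hq0 hγ.le
    have : 0 ≤ (1 - q) * κ := mul_nonneg (by linarith) hκ.le
    linarith
  have hΨpos : 0 < Ψ := by rw [hΨ]; positivity
  have hDpos : 0 < D := by rw [hD]; positivity
  have hx : β * Φ ≠ 0 := by positivity
  have hDne : D ≠ 0 := hDpos.ne'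
  subst hΨ hΦ hSe hAe hIe hRe
  refine ⟨?_, ?_, ?_, ?_⟩ <;> field_simp <;> ring
end

section
/- Let β, σ, γ, κ > 0, δ > 0 and q ∈ (0,1), and define Ψ = γ(κ+σ), Φ = qγ + (1−q)κ + σ, C = βΦ − Ψ, D = δΦ + Ψ. Then the components of the endemic equilibrium (S^e, A^e, I^e, R^e) = ( Ψ/(βΦ), qδγC/(βΦD), δ((1−q)κ+σ)C/(βΦD), ΨC/(βΦD) ) sum to 1: S^e + A^e + I^e + R^e = 1. Moreover, if C > 0 then each of S^e, A^e, I^e, R^e lies in the open interval (0,1). -/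
/-! The numerators of `A^e` and `I^e` add up to `δ Φ C`, because `q γ + ((1 - q) κ + σ) = Φ`.
Hence `A^e + I^e + R^e = (δ Φ + Ψ) C / (β Φ D) = C / (β Φ)`, and adding `S^e = Ψ / (β Φ)` gives
`(Ψ + C) / (β Φ) = 1`. For the bounds, every component is a quotient of positive quantities once
`C > 0`, and four positive numbers summing to `1` all lie in `(0, 1)`. -/

theorem Set.mem_Ioo_of_pos_of_add_add_add_eq_one {a b c d : ℝ}
    (ha : 0 < a) (hb : 0 < b) (hc : 0 < c) (hd : 0 < d) (h : a + b + c + d = 1) :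
    a ∈ Ioo 0 1 ∧ b ∈ Ioo 0 1 ∧ c ∈ Ioo 0 1 ∧ d ∈ Ioo 0 1 :=
  ⟨⟨ha, by linarith⟩, ⟨hb, by linarith⟩, ⟨hc, by linarith⟩, ⟨hd, by linarith⟩⟩

theorem sairs_equilibrium_sum_eq_one {K : Type*} [Field K] {β σ γ κ δ q Ψ Φ C D : K}
    (hβ : β ≠ 0) (hΦ₀ : Φ ≠ 0) (hD₀ : D ≠ 0)
    (hΦ : Φ = q * γ + (1 - q) * κ + σ) (hC : C = β * Φ - Ψ) (hD : D = δ * Φ + Ψ) :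
    Ψ / (β * Φ) + q * δ * γ * C / (β * Φ * D) + δ * ((1 - q) * κ + σ) * C / (β * Φ * D)
      + Ψ * C / (β * Φ * D) = 1 := by
  field_simp
  linear_combination (-δ * C) * hΦ + D * hC + (-C) * hD

theorem one_sub_mul_add_pos {q κ σ : ℝ} (hq : q ≤ 1) (hκ : 0 ≤ κ) (hσ : 0 < σ) :
    0 < (1 - q) * κ + σ :=
  add_pos_of_nonneg_of_pos (mul_nonneg (sub_nonneg.mpr hq) hκ) hσ

/-- The components of the endemic equilibrium of the group SAIR(S) model sum
to `1`; moreover, if `C > 0` then each component lies in the open interval `(0,1)`. -/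
theorem sairs_endemic_equilibrium_in_simplex
    (β σ γ κ δ q : ℝ)
    (hβ : 0 < β) (hσ : 0 < σ) (hγ : 0 < γ) (hκ : 0 < κ) (hδ : 0 < δ)
    (hq : q ∈ Set.Ioo (0 : ℝ) 1)
    (Ψ Φ C D Se Ae Ie Re : ℝ)
    (hΨ : Ψ = γ * (κ + σ)) (hΦ : Φ = q * γ + (1 - q) * κ + σ)
    (hC : C = β * Φ - Ψ) (hD : D = δ * Φ + Ψ)
    (hSe : Se = Ψ / (β * Φ))
    (hAe : Ae = q * δ * γ * C / (β * Φ * D))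
    (hIe : Ie = δ * ((1 - q) * κ + σ) * C / (β * Φ * D))
    (hRe : Re = Ψ * C / (β * Φ * D)) :
    Se + Ae + Ie + Re = 1 ∧
    (0 < C → Se ∈ Set.Ioo (0 : ℝ) 1 ∧ Ae ∈ Set.Ioo (0 : ℝ) 1 ∧
      Ie ∈ Set.Ioo (0 : ℝ) 1 ∧ Re ∈ Set.Ioo (0 : ℝ) 1) := by
  obtain ⟨hq₀, hq₁⟩ := hq
  have hI₀ : 0 < (1 - q) * κ + σ := one_sub_mul_add_pos hq₁.le hκ.le hσ
  have hΦ₀ : 0 < Φ := by rw [hΦ, add_assoc]; positivity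
  have hΨ₀ : 0 < Ψ := by rw [hΨ]; positivity
  have hD₀ : 0 < D := by rw [hD]; positivity
  have hsum : Se + Ae + Ie + Re = 1 := by
    rw [hSe, hAe, hIe, hRe]
    exact sairs_equilibrium_sum_eq_one hβ.ne' hΦ₀.ne' hD₀.ne' hΦ hC hD
  refine ⟨hsum, fun hC₀ => Set.mem_Ioo_of_pos_of_add_add_add_eq_one ?_ ?_ ?_ ?_ hsum⟩ <;>
    simp only [hSe, hAe, hIe, hRe] <;> positivity
end

section
/- Consider the networked SAIR(S) model with δ_i = 0 for all i, with symmetric nonnegative adjacency matrix W, positive diagonal matrices B = diag(β_i), K = diag(κ_i), Γ = diag(γ_i), Σ = diag(σ_i), and q ∈ [0,1]. Let (s, a, p, r) be a solution whose state remains in the simplex (all components in [0,1], s_i + a_i + p_i + r_i = 1 for all i and t ≥ 0), and define V(t) = a(t)ᵀB⁻¹a(t) + p(t)ᵀB⁻¹p(t). Then for all t ≥ 0, (1/2)·dV/dt ≤ aᵀ[qW − B⁻¹(Σ+K)]a + pᵀ[(1−q)W − B⁻¹Γ]p + aᵀ(W + B⁻¹Σ)p, where a = a(t), p = p(t). -/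
/-!
With `V = ∑ᵢ βᵢ⁻¹ (aᵢ² + pᵢ²)`, node `i` contributes `βᵢ⁻¹ (aᵢ ȧᵢ + pᵢ ṗᵢ)` to `V' / 2`. The
`βᵢ⁻¹` cancels the `βᵢ` of the infection terms, which add up to
`sᵢ (q aᵢ + (1 - q) pᵢ) (W(a + p))ᵢ ≥ 0`; since `sᵢ ≤ 1`, dropping `sᵢ` can only increase them.
Summed over `i`, symmetry of `W` turns `pᵀWa` into `aᵀWp`, so the `q` and `1 - q` shares of the
cross term add up to `aᵀWp`.
-/

open Matrix Finset

theorem Matrix.inv_diagonal_of_ne_zero {n K : Type*} [Fintype n] [DecidableEq n] [Field K]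
    {v : n → K} (hv : ∀ i, v i ≠ 0) : (diagonal v)⁻¹ = diagonal v⁻¹ :=
  inv_eq_right_inv <| by
    rw [diagonal_mul_diagonal, ← diagonal_one]
    exact congrArg diagonal (funext fun i => mul_inv_cancel₀ (hv i))

theorem Matrix.IsSymm.dotProduct_mulVec_comm {n R : Type*} [Fintype n] [CommSemiring R]
    {W : Matrix n n R} (hW : W.IsSymm) (x y : n → R) : y ⬝ᵥ (W *ᵥ x) = x ⬝ᵥ (W *ᵥ y) := by
  rw [dotProduct_mulVec, ← mulVec_transpose, hW.eq, dotProduct_comm]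

theorem hasDerivAt_sum_mul_sq {ι 𝕜 : Type*} [NontriviallyNormedField 𝕜] (s : Finset ι)
    (w : ι → 𝕜) {f : ι → 𝕜 → 𝕜} {f' : ι → 𝕜} {t : 𝕜} (hf : ∀ i ∈ s, HasDerivAt (f i) (f' i) t) :
    HasDerivAt (fun u => ∑ i ∈ s, w i * f i u ^ 2) (∑ i ∈ s, 2 * w i * f i t * f' i) t := by
  refine HasDerivAt.fun_sum fun i hi => (((hf i hi).fun_pow 2).const_mul (w i)).congr_deriv ?_
  norm_num
  ring

theorem sair_node_lyapunov_rate_le {b s x y c q σ κ γ : ℝ} (hb : b ≠ 0) (hs : s ≤ 1)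
    (hx : 0 ≤ x) (hy : 0 ≤ y) (hc : 0 ≤ c) (hq0 : 0 ≤ q) (hq1 : q ≤ 1) :
    b⁻¹ * x * (q * b * s * c - σ * x - κ * x) + b⁻¹ * y * ((1 - q) * b * s * c + σ * x - γ * y)
      ≤ q * x * c + (1 - q) * y * c + b⁻¹ * (σ * x * y - (σ + κ) * x ^ 2 - γ * y ^ 2) := by
  have hinfect : 0 ≤ (q * x + (1 - q) * y) * c := by
    have hq1' := sub_nonneg.2 hq1
    positivity
  have hlhs : b⁻¹ * x * (q * b * s * c - σ * x - κ * x)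
      + b⁻¹ * y * ((1 - q) * b * s * c + σ * x - γ * y)
      = s * ((q * x + (1 - q) * y) * c) + b⁻¹ * (σ * x * y - (σ + κ) * x ^ 2 - γ * y ^ 2) := by
    field_simp
    ring
  rw [hlhs]
  nlinarith

theorem sum_sair_node_bounds_eq {n : Type*} [Fintype n] [DecidableEq n] {W : Matrix n n ℝ}
    (hW : W.IsSymm) (x y b σ κ γ : n → ℝ) (q : ℝ) :
    ∑ i, (q * x i * (W *ᵥ (x + y)) i + (1 - q) * y i * (W *ᵥ (x + y)) i
        + b i * (σ i * x i * y i - (σ i + κ i) * x i ^ 2 - γ i * y i ^ 2))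
      = x ⬝ᵥ ((q • W - diagonal b * (diagonal σ + diagonal κ)) *ᵥ x)
        + y ⬝ᵥ (((1 - q) • W - diagonal b * diagonal γ) *ᵥ y)
        + x ⬝ᵥ ((W + diagonal b * diagonal σ) *ᵥ y) := by
  rw [← sub_eq_zero]
  calc _ = (1 - q) * (y ⬝ᵥ (W *ᵥ x) - x ⬝ᵥ (W *ᵥ y)) := by
        simp only [dotProduct, ← sum_add_distrib, ← sum_sub_distrib, mul_sum]
        refine sum_congr rfl fun i _ => ?_
        simp only [diagonal_add, diagonal_mul_diagonal, sub_mulVec, add_mulVec, smul_mulVec,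
          mulVec_add, mulVec_diagonal, Pi.add_apply, Pi.sub_apply, Pi.smul_apply, smul_eq_mul]
        ring
    _ = 0 := by rw [hW.dotProduct_mulVec_comm, sub_self, mul_zero]

theorem nsairs_lyapunov_derivative_bound_general
    (n : ℕ) (s a p r : Fin n → ℝ → ℝ)
    (β γ κ σ : Fin n → ℝ) (Wm : Matrix (Fin n) (Fin n) ℝ) (q : ℝ)
    (hβ : ∀ i, 0 < β i)
    (hWsymm : Wm.IsSymm) (hWnonneg : ∀ i j, 0 ≤ Wm i j)
    (hq0 : 0 ≤ q) (hq1 : q ≤ 1)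
    (ha : ∀ i, ∀ t ≥ (0 : ℝ), HasDerivAt (a i)
      (q * β i * s i t * (∑ j, Wm i j * (a j t + p j t)) - σ i * a i t - κ i * a i t) t)
    (hp : ∀ i, ∀ t ≥ (0 : ℝ), HasDerivAt (p i)
      ((1 - q) * β i * s i t * (∑ j, Wm i j * (a j t + p j t)) + σ i * a i t - γ i * p i t) t)
    (hsimplex : ∀ t ≥ (0 : ℝ), ∀ i,
      s i t ∈ Set.Icc (0 : ℝ) 1 ∧ a i t ∈ Set.Icc (0 : ℝ) 1 ∧
      p i t ∈ Set.Icc (0 : ℝ) 1 ∧ r i t ∈ Set.Icc (0 : ℝ) 1 ∧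
      s i t + a i t + p i t + r i t = 1)
    (Bm Km Γm Sm : Matrix (Fin n) (Fin n) ℝ)
    (hBm : Bm = Matrix.diagonal β) (hKm : Km = Matrix.diagonal κ)
    (hΓm : Γm = Matrix.diagonal γ) (hSm : Sm = Matrix.diagonal σ)
    (avec pvec : ℝ → (Fin n → ℝ))
    (havec : ∀ t i, avec t i = a i t) (hpvec : ∀ t i, pvec t i = p i t)
    (V : ℝ → ℝ)
    (hV : ∀ t, V t = avec t ⬝ᵥ (Bm⁻¹ *ᵥ avec t) + pvec t ⬝ᵥ (Bm⁻¹ *ᵥ pvec t)) :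
    ∀ t ≥ (0 : ℝ),
      (1 / 2) * deriv V t ≤
        avec t ⬝ᵥ ((q • Wm - Bm⁻¹ * (Sm + Km)) *ᵥ avec t)
        + pvec t ⬝ᵥ (((1 - q) • Wm - Bm⁻¹ * Γm) *ᵥ pvec t)
        + avec t ⬝ᵥ ((Wm + Bm⁻¹ * Sm) *ᵥ pvec t) := by
  intro t ht
  have hBinv : Bm⁻¹ = diagonal β⁻¹ := hBm ▸ inv_diagonal_of_ne_zero fun i => (hβ i).ne'
  have hVsum : V = fun u => ∑ i, β⁻¹ i * a i u ^ 2 + ∑ i, β⁻¹ i * p i u ^ 2 := by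
    funext u
    simp only [hV, hBinv, dotProduct, mulVec_diagonal, havec, hpvec]
    congr 1 <;> exact sum_congr rfl fun i _ => by ring
  have hderiv := (hasDerivAt_sum_mul_sq univ β⁻¹ fun i _ => ha i t ht).fun_add
    (hasDerivAt_sum_mul_sq univ β⁻¹ fun i _ => hp i t ht)
  rw [hVsum, hderiv.deriv, funext (havec t), funext (hpvec t), hBinv, hSm, hKm, hΓm,
    ← sum_sair_node_bounds_eq hWsymm, ← sum_add_distrib, mul_sum]
  refine sum_le_sum fun i _ => ?_
  obtain ⟨⟨-, hs1⟩, ⟨ha0, -⟩, ⟨hp0, -⟩, -⟩ := hsimplex t ht i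
  have hc : 0 ≤ ∑ j, Wm i j * (a j t + p j t) := sum_nonneg fun j _ =>
    mul_nonneg (hWnonneg i j) (add_nonneg (hsimplex t ht j).2.1.1 (hsimplex t ht j).2.2.1.1)
  simp only [mulVec, dotProduct, Pi.add_apply]
  linear_combination sair_node_lyapunov_rate_le (σ := σ i) (κ := κ i) (γ := γ i)
    (hβ i).ne' hs1 ha0 hp0 hc hq0 hq1

/-- Lyapunov derivative bound for the networked SAIR(S) model with
permanent immunity (`δ_i = 0`): along any solution remaining in the simplex, the
Lyapunov function `V = aᵀB⁻¹a + pᵀB⁻¹p` satisfies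
`(1/2)·dV/dt ≤ aᵀ[qW − B⁻¹(Σ+K)]a + pᵀ[(1−q)W − B⁻¹Γ]p + aᵀ(W + B⁻¹Σ)p`. -/
theorem nsairs_lyapunov_derivative_bound
    (n : ℕ) (s a p r : Fin n → ℝ → ℝ)
    (β γ κ σ δ : Fin n → ℝ) (Wm : Matrix (Fin n) (Fin n) ℝ) (q : ℝ)
    (hβ : ∀ i, 0 < β i) (hγ : ∀ i, 0 < γ i) (hκ : ∀ i, 0 < κ i)
    (hσ : ∀ i, 0 < σ i) (hδ : ∀ i, δ i = 0)
    (hWsymm : Wm.IsSymm) (hWnonneg : ∀ i j, 0 ≤ Wm i j)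
    (hq0 : 0 ≤ q) (hq1 : q ≤ 1)
    (hs : ∀ i, ∀ t ≥ (0 : ℝ), HasDerivAt (s i)
      (-(β i) * s i t * (∑ j, Wm i j * (a j t + p j t)) + δ i * r i t) t)
    (ha : ∀ i, ∀ t ≥ (0 : ℝ), HasDerivAt (a i)
      (q * β i * s i t * (∑ j, Wm i j * (a j t + p j t)) - σ i * a i t - κ i * a i t) t)
    (hp : ∀ i, ∀ t ≥ (0 : ℝ), HasDerivAt (p i)
      ((1 - q) * β i * s i t * (∑ j, Wm i j * (a j t + p j t)) + σ i * a i t - γ i * p i t) t)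
    (hr : ∀ i, ∀ t ≥ (0 : ℝ), HasDerivAt (r i)
      (κ i * a i t + γ i * p i t - δ i * r i t) t)
    (hsimplex : ∀ t ≥ (0 : ℝ), ∀ i,
      s i t ∈ Set.Icc (0 : ℝ) 1 ∧ a i t ∈ Set.Icc (0 : ℝ) 1 ∧
      p i t ∈ Set.Icc (0 : ℝ) 1 ∧ r i t ∈ Set.Icc (0 : ℝ) 1 ∧
      s i t + a i t + p i t + r i t = 1)
    (Bm Km Γm Sm : Matrix (Fin n) (Fin n) ℝ)
    (hBm : Bm = Matrix.diagonal β) (hKm : Km = Matrix.diagonal κ)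
    (hΓm : Γm = Matrix.diagonal γ) (hSm : Sm = Matrix.diagonal σ)
    (avec pvec : ℝ → (Fin n → ℝ))
    (havec : ∀ t i, avec t i = a i t) (hpvec : ∀ t i, pvec t i = p i t)
    (V : ℝ → ℝ)
    (hV : ∀ t, V t = avec t ⬝ᵥ (Bm⁻¹ *ᵥ avec t) + pvec t ⬝ᵥ (Bm⁻¹ *ᵥ pvec t)) :
    ∀ t ≥ (0 : ℝ),
      (1 / 2) * deriv V t ≤
        avec t ⬝ᵥ ((q • Wm - Bm⁻¹ * (Sm + Km)) *ᵥ avec t)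
        + pvec t ⬝ᵥ (((1 - q) • Wm - Bm⁻¹ * Γm) *ᵥ pvec t)
        + avec t ⬝ᵥ ((Wm + Bm⁻¹ * Sm) *ᵥ pvec t) :=
  nsairs_lyapunov_derivative_bound_general n s a p r β γ κ σ Wm q hβ hWsymm hWnonneg hq0 hq1 ha hp
    hsimplex Bm Km Γm Sm hBm hKm hΓm hSm avec pvec havec hpvec V hV
end
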